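/- arXiv:1412.2185 — 12 statements merged into one kernel-verified Lean document; each statement's English description precedes it below -/
import Mathlib

section
/- For all finite sets σ, μ, λ of natural numbers and all natural numbers p < q < r, the identity A(σΔμ, λΔσ, λΔσ)(p,q,r) + A(σ,μ,μ)(p,q,r) + A(λ,σ,σ)(p,q,r) + A(σΔμΔλ, σ, σ)(p,q,r) + A(σ, μΔλ, μΔλ)(p,q,r) + A(μ,λ,λ)(p,q,r) = 0 holds in ZMod 2. -/
set_option maxHeartbeats 4000000


/-- Indicator function of a `Finset ℕ` with values in `ZMod 2`. -/
def ind (S : Finset ℕ) (i : ℕ) : ZMod 2 := if i ∈ S then 1 else 0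

/-- `A (σ,μ,λ) (p,q,r)` is the coefficient of the basis element `p∧q∧r` (`p < q < r`)
in `[σ,μ,λ] = ∏_{i∈σ, j∈μ, k∈λ, j<k} i∧j∧k`. -/
def A (σ μ ν : Finset ℕ) (p q r : ℕ) : ZMod 2 :=
  ind σ p * ind μ q * ind ν r + ind σ q * ind μ p * ind ν r +
    ind σ r * ind μ p * ind ν q

lemma ind_symmDiff (s t : Finset ℕ) (i : ℕ) :
    ind (symmDiff s t) i = ind s i + ind t i := by
  simp only [ind, Finset.mem_symmDiff]
  by_cases h1 : i ∈ s <;> by_cases h2 : i ∈ t <;> simp [h1, h2] <;> decide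

lemma ind_cases (s : Finset ℕ) (i : ℕ) : ind s i = 0 ∨ ind s i = 1 := by
  unfold ind; split_ifs <;> simp

/-- Identity (13) of Lemma 2.3:
`[σΔμ, λΔσ, λΔσ][σ,μ,μ][λ,σ,σ][σΔμΔλ,σ,σ][σ,μΔλ,μΔλ][μ,λ,λ] = 1`. -/
theorem stmt4 (σ μ ν : Finset ℕ) (p q r : ℕ) (hpq : p < q) (hqr : q < r) :
    A (symmDiff σ μ) (symmDiff ν σ) (symmDiff ν σ) p q r + A σ μ μ p q r +
        A ν σ σ p q r + A (symmDiff (symmDiff σ μ) ν) σ σ p q r +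
        A σ (symmDiff μ ν) (symmDiff μ ν) p q r + A μ ν ν p q r = 0 := by
  simp only [A, ind_symmDiff]
  rcases ind_cases σ p with h1 | h1 <;> rcases ind_cases σ q with h2 | h2 <;>
    rcases ind_cases σ r with h3 | h3 <;> rcases ind_cases μ p with h4 | h4 <;>
    rcases ind_cases μ q with h5 | h5 <;> rcases ind_cases μ r with h6 | h6 <;>
    rcases ind_cases ν p with h7 | h7 <;> rcases ind_cases ν q with h8 | h8 <;>
    rcases ind_cases ν r with h9 | h9 <;>
    rw [h1, h2, h3, h4, h5, h6, h7, h8, h9] <;> decide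
end

section
/- The magma ℱ = Finset ℕ × Z with product (σ, z) * (μ, w) = (σ Δ μ, z + w + c(σ, μ)) has (∅, 0) as a two-sided identity element, every element of ℱ has a two-sided inverse, and ℱ satisfies the Moufang identity: for all a, b, c ∈ ℱ, (a * b) * (c * a) = (a * (b * c)) * a. -/
lemma ind_symm (α β : Finset ℕ) (i : ℕ) :
    (if i ∈ symmDiff α β then (1:ZMod 2) else 0)
      = (if i ∈ α then 1 else 0) + (if i ∈ β then 1 else 0) := by
  by_cases hα : i ∈ α <;> by_cases hβ : i ∈ β <;>
    simp [Finset.mem_symmDiff, hα, hβ] <;> decide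

lemma ind_inter (α β : Finset ℕ) (i : ℕ) :
    (if i ∈ α ∩ β then (1:ZMod 2) else 0)
      = (if i ∈ α then 1 else 0) * (if i ∈ β then 1 else 0) := by
  by_cases hα : i ∈ α <;> by_cases hβ : i ∈ β <;>
    simp [Finset.mem_inter, hα, hβ]

lemma zid1 : ∀ x y u : ZMod 2,
    x*y + u*x + (x+y)*(u+x) = y*u + x*(y+u) + (x+(y+u))*x := by decide

lemma zid2 : ∀ x1 y1 u1 x2 y2 u2 : ZMod 2,
    x1*y2 + u1*x2 + (x1+y1)*(u2+x2)
      = y1*u2 + x1*(y2+u2) + (x1+(y1+u1))*x2 := by decide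

lemma zid3 : ∀ xp yp up xq yq uq xr yr ur : ZMod 2,
    (xp*yq*yr + xq*yp*yr + xr*yp*yq)
    + (up*xq*xr + uq*xp*xr + ur*xp*xq)
    + ((xp+yp)*(uq+xq)*(ur+xr) + (xq+yq)*(up+xp)*(ur+xr) + (xr+yr)*(up+xp)*(uq+xq))
    = (yp*uq*ur + yq*up*ur + yr*up*uq)
    + (xp*(yq+uq)*(yr+ur) + xq*(yp+up)*(yr+ur) + xr*(yp+up)*(yq+uq))
    + ((xp+(yp+up))*xq*xr + (xq+(yq+uq))*xp*xr + (xr+(yr+ur))*xp*xq) := by decide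

lemma pair_sorted (S : Finset ℕ) (h : S.card = 2) : ∃ i j, j < i ∧ S = {i, j} := by
  obtain ⟨a, b, hab, rfl⟩ := Finset.card_eq_two.mp h
  rcases hab.lt_or_gt with h | h
  · exact ⟨b, a, h, Finset.pair_comm a b⟩
  · exact ⟨a, b, h, rfl⟩

lemma triple_sorted (S : Finset ℕ) (h : S.card = 3) :
    ∃ p q r, p < q ∧ q < r ∧ S = {p, q, r} := by
  obtain ⟨a, b, c, hab, hac, hbc, rfl⟩ := Finset.card_eq_three.mp h
  rcases lt_trichotomy a b with h1 | h1 | h1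
  · rcases lt_trichotomy b c with h2 | h2 | h2
    · exact ⟨a, b, c, h1, h2, rfl⟩
    · exact absurd h2 hbc
    · rcases lt_trichotomy a c with h3 | h3 | h3
      · exact ⟨a, c, b, h3, h2, by ext x; simp; tauto⟩
      · exact absurd h3 hac
      · exact ⟨c, a, b, h3, h1, by ext x; simp; tauto⟩
  · exact absurd h1 hab
  · rcases lt_trichotomy a c with h2 | h2 | h2
    · exact ⟨b, a, c, h1, h2, by ext x; simp; tauto⟩
    · exact absurd h2 hac
    · rcases lt_trichotomy b c with h3 | h3 | h3
      · exact ⟨b, c, a, h3, h2, by ext x; simp; tauto⟩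
      · exact absurd h3 hbc
      · exact ⟨c, b, a, h3, h1, by ext x; simp; tauto⟩

set_option linter.unnecessarySeqFocus false

lemma key_lemma
    (c : Finset ℕ → Finset ℕ → (Finset ℕ →₀ ZMod 2))
    (hc_one : ∀ σ μ : Finset ℕ, ∀ i : ℕ,
      c σ μ {i} = if i ∈ σ ∩ μ then 1 else 0)
    (hc_two : ∀ σ μ : Finset ℕ, ∀ i j : ℕ, j < i →
      c σ μ {i, j} = (if i ∈ σ then 1 else 0) * (if j ∈ μ then 1 else 0))
    (hc_three : ∀ σ μ : Finset ℕ, ∀ p q r : ℕ, p < q → q < r →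
      c σ μ {p, q, r} =
        (if p ∈ σ then 1 else 0) * (if q ∈ μ then 1 else 0) * (if r ∈ μ then 1 else 0)
        + (if q ∈ σ then 1 else 0) * (if p ∈ μ then 1 else 0) * (if r ∈ μ then 1 else 0)
        + (if r ∈ σ then 1 else 0) * (if p ∈ μ then 1 else 0) * (if q ∈ μ then 1 else 0))
    (hc_other : ∀ σ μ : Finset ℕ, ∀ S : Finset ℕ,
      S.card ≠ 1 → S.card ≠ 2 → S.card ≠ 3 → c σ μ S = 0)
    (σ μ ν : Finset ℕ) :
    c σ μ + c ν σ + c (symmDiff σ μ) (symmDiff ν σ)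
      = c μ ν + c σ (symmDiff μ ν) + c (symmDiff σ (symmDiff μ ν)) σ := by
  ext S
  simp only [Finsupp.add_apply]
  by_cases h1 : S.card = 1
  · obtain ⟨i, rfl⟩ := Finset.card_eq_one.mp h1
    rw [hc_one, hc_one, hc_one, hc_one, hc_one, hc_one]
    simp only [ind_inter, ind_symm]
    exact zid1 _ _ _
  by_cases h2 : S.card = 2
  · obtain ⟨i, j, hji, rfl⟩ := pair_sorted S h2
    rw [hc_two _ _ _ _ hji, hc_two _ _ _ _ hji, hc_two _ _ _ _ hji,
      hc_two _ _ _ _ hji, hc_two _ _ _ _ hji, hc_two _ _ _ _ hji]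
    simp only [ind_symm]
    exact zid2 _ _ _ _ _ _
  by_cases h3 : S.card = 3
  · obtain ⟨p, q, r, hpq, hqr, rfl⟩ := triple_sorted S h3
    rw [hc_three _ _ _ _ _ hpq hqr, hc_three _ _ _ _ _ hpq hqr,
      hc_three _ _ _ _ _ hpq hqr, hc_three _ _ _ _ _ hpq hqr,
      hc_three _ _ _ _ _ hpq hqr, hc_three _ _ _ _ _ hpq hqr]
    simp only [ind_symm]
    exact zid3 _ _ _ _ _ _ _ _ _
  · rw [hc_other _ _ _ h1 h2 h3, hc_other _ _ _ h1 h2 h3, hc_other _ _ _ h1 h2 h3,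
      hc_other _ _ _ h1 h2 h3, hc_other _ _ _ h1 h2 h3, hc_other _ _ _ h1 h2 h3]

lemma c_empty_left
    (c : Finset ℕ → Finset ℕ → (Finset ℕ →₀ ZMod 2))
    (hc_one : ∀ σ μ : Finset ℕ, ∀ i : ℕ,
      c σ μ {i} = if i ∈ σ ∩ μ then 1 else 0)
    (hc_two : ∀ σ μ : Finset ℕ, ∀ i j : ℕ, j < i →
      c σ μ {i, j} = (if i ∈ σ then 1 else 0) * (if j ∈ μ then 1 else 0))
    (hc_three : ∀ σ μ : Finset ℕ, ∀ p q r : ℕ, p < q → q < r →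
      c σ μ {p, q, r} =
        (if p ∈ σ then 1 else 0) * (if q ∈ μ then 1 else 0) * (if r ∈ μ then 1 else 0)
        + (if q ∈ σ then 1 else 0) * (if p ∈ μ then 1 else 0) * (if r ∈ μ then 1 else 0)
        + (if r ∈ σ then 1 else 0) * (if p ∈ μ then 1 else 0) * (if q ∈ μ then 1 else 0))
    (hc_other : ∀ σ μ : Finset ℕ, ∀ S : Finset ℕ,
      S.card ≠ 1 → S.card ≠ 2 → S.card ≠ 3 → c σ μ S = 0)
    (μ : Finset ℕ) : c ∅ μ = 0 ∧ c μ ∅ = 0 := by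
  constructor <;> ext S <;>
  · by_cases h1 : S.card = 1
    · obtain ⟨i, rfl⟩ := Finset.card_eq_one.mp h1
      rw [hc_one]; simp
    by_cases h2 : S.card = 2
    · obtain ⟨i, j, hji, rfl⟩ := pair_sorted S h2
      rw [hc_two _ _ _ _ hji]; simp
    by_cases h3 : S.card = 3
    · obtain ⟨p, q, r, hpq, hqr, rfl⟩ := triple_sorted S h3
      rw [hc_three _ _ _ _ _ hpq hqr]; simp
    · rw [hc_other _ _ _ h1 h2 h3]; simp


/-- Theorem 2.4: the magma `ℱ = Finset ℕ × Z`, where `Z = Finset ℕ →₀ ZMod 2`, with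
product `(σ, z) * (μ, w) = (σ Δ μ, z + w + c σ μ)` — where `c σ μ ∈ Z` is the factor
set whose value is `1_{σ∩μ}(i)` at a singleton `{i}`, `1_σ(i)·1_μ(j)` at a pair `{i,j}`
with `i > j`, the alternating-sum expression at a triple `{p,q,r}` with `p < q < r`,
and `0` at finsets of any other cardinality — has `(∅, 0)` as a two-sided identity,
every element has a two-sided inverse, and the Moufang identity
`(a * b) * (c * a) = (a * (b * c)) * a` holds. -/
theorem stmt5
    (c : Finset ℕ → Finset ℕ → (Finset ℕ →₀ ZMod 2))
    (hc_one : ∀ σ μ : Finset ℕ, ∀ i : ℕ,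
      c σ μ {i} = if i ∈ σ ∩ μ then 1 else 0)
    (hc_two : ∀ σ μ : Finset ℕ, ∀ i j : ℕ, j < i →
      c σ μ {i, j} = (if i ∈ σ then 1 else 0) * (if j ∈ μ then 1 else 0))
    (hc_three : ∀ σ μ : Finset ℕ, ∀ p q r : ℕ, p < q → q < r →
      c σ μ {p, q, r} =
        (if p ∈ σ then 1 else 0) * (if q ∈ μ then 1 else 0) * (if r ∈ μ then 1 else 0)
        + (if q ∈ σ then 1 else 0) * (if p ∈ μ then 1 else 0) * (if r ∈ μ then 1 else 0)
        + (if r ∈ σ then 1 else 0) * (if p ∈ μ then 1 else 0) * (if q ∈ μ then 1 else 0))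
    (hc_other : ∀ σ μ : Finset ℕ, ∀ S : Finset ℕ,
      S.card ≠ 1 → S.card ≠ 2 → S.card ≠ 3 → c σ μ S = 0)
    (mul : Finset ℕ × (Finset ℕ →₀ ZMod 2) → Finset ℕ × (Finset ℕ →₀ ZMod 2) →
      Finset ℕ × (Finset ℕ →₀ ZMod 2))
    (hmul : ∀ a b, mul a b = (symmDiff a.1 b.1, a.2 + b.2 + c a.1 b.1)) :
    (∀ a, mul (∅, 0) a = a ∧ mul a (∅, 0) = a) ∧
    (∀ a, ∃ b, mul a b = (∅, 0) ∧ mul b a = (∅, 0)) ∧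
    (∀ a b d, mul (mul a b) (mul d a) = mul (mul a (mul b d)) a) := by
  have hkey := key_lemma c hc_one hc_two hc_three hc_other
  have hce : ∀ μ : Finset ℕ, c ∅ μ = 0 ∧ c μ ∅ = 0 :=
    c_empty_left c hc_one hc_two hc_three hc_other
  refine ⟨?_, ?_, ?_⟩
  · rintro ⟨σ, z⟩
    constructor
    · rw [hmul]
      simp [Prod.ext_iff, (hce σ).1]
    · rw [hmul]
      simp [Prod.ext_iff, (hce σ).2]
  · rintro ⟨σ, z⟩
    refine ⟨(σ, -(z + c σ σ)), ?_, ?_⟩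
    · rw [hmul]
      simp only [Prod.mk.injEq, symmDiff_self, Finset.bot_eq_empty]
      exact ⟨trivial, by abel⟩
    · rw [hmul]
      simp only [Prod.mk.injEq, symmDiff_self, Finset.bot_eq_empty]
      exact ⟨trivial, by abel⟩
  · rintro ⟨σ, z⟩ ⟨μ, w⟩ ⟨ν, v⟩
    rw [hmul, hmul, hmul, hmul, hmul, hmul]
    simp only [Prod.mk.injEq]
    constructor
    · ext i
      simp only [Finset.mem_symmDiff]
      tauto
    · have hk := hkey σ μ ν
      calc z + w + c σ μ + (v + z + c ν σ) + c (symmDiff σ μ) (symmDiff ν σ)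
          = (z + z + w + v)
            + (c σ μ + c ν σ + c (symmDiff σ μ) (symmDiff ν σ)) := by abel
        _ = (z + z + w + v)
            + (c μ ν + c σ (symmDiff μ ν) + c (symmDiff σ (symmDiff μ ν)) σ) := by rw [hk]
        _ = z + (w + v + c μ ν) + c σ (symmDiff μ ν) + z
            + c (symmDiff σ (symmDiff μ ν)) σ := by abel
end

section
/- Let V be a 4-dimensional vector space over the field ZMod 2 and let f be a nonzero alternating trilinear form on V (an alternating map from V × V × V to ZMod 2). Then the nucleus N = {v ∈ V | f(v, w, u) = 0 for all w, u ∈ V} is a 1-dimensional subspace of V, and there exists a basis (a, b, c, d) of V such that f(a, b, c) = 1 and d ∈ N (so N = {0, d}). -/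
/-!
Pick `a, b, c` with `f(a,b,c) = 1`. The linear map `π v = (f(v,b,c), f(v,c,a), f(v,a,b))` sends
`a, b, c` to the standard basis of `K³`, so its kernel is a line `K ∙ d` complementary to
`span {a, b, c}`. The bilinear form `f(d,·,·)` vanishes on all pairs from the basis `(a, b, c, d)`,
so `d` lies in the nucleus; since the nucleus is contained in `ker π`, it is exactly `K ∙ d`.
-/

open Module Submodule

section DualFamily

variable {R M ι : Type*} [Semiring R] [AddCommMonoid M] [Module R M] [Fintype ι] [DecidableEq ι]
  {π : M →ₗ[R] ι → R} {v : ι → M}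

theorem LinearMap.apply_sum_smul_of_apply_eq_single (hv : ∀ i, π (v i) = Pi.single i 1)
    (t : ι → R) : π (∑ i, t i • v i) = t := by
  ext j
  simp [hv, Pi.single_apply]

theorem LinearMap.surjective_of_apply_eq_single (hv : ∀ i, π (v i) = Pi.single i 1) :
    Function.Surjective π :=
  fun t => ⟨_, LinearMap.apply_sum_smul_of_apply_eq_single hv t⟩

theorem LinearIndependent.of_apply_eq_single (hv : ∀ i, π (v i) = Pi.single i 1) :
    LinearIndependent R v :=
  LinearIndependent.of_comp π <| by
    convert (Pi.basisFun R ι).linearIndependent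
    ext1 i
    simp [hv]

theorem LinearMap.disjoint_span_ker_of_apply_eq_single (hv : ∀ i, π (v i) = Pi.single i 1) :
    Disjoint (span R (Set.range v)) (LinearMap.ker π) := by
  rw [disjoint_def]
  rintro _ hx hker
  obtain ⟨t, rfl⟩ := (mem_span_range_iff_exists_fun R).1 hx
  have ht : t = 0 := by
    rw [← LinearMap.apply_sum_smul_of_apply_eq_single hv t]
    exact hker
  simp [ht]

theorem LinearIndependent.finSnoc_of_apply_eq_single {K V : Type*} [Field K] [AddCommGroup V]
    [Module K V] {n : ℕ} {π : V →ₗ[K] Fin n → K} {v : Fin n → V}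
    (hv : ∀ i, π (v i) = Pi.single i 1) {d : V} (hd : d ∈ LinearMap.ker π) (hd₀ : d ≠ 0) :
    LinearIndependent K (Fin.snoc v d : Fin (n + 1) → V) :=
  linearIndependent_finSnoc.2 ⟨.of_apply_eq_single hv, fun hspan =>
    hd₀ (disjoint_def.1 (LinearMap.disjoint_span_ker_of_apply_eq_single hv) d hspan hd)⟩

end DualFamily

namespace AlternatingMap

section CommRing

variable {R M N : Type*} [CommRing R] [AddCommGroup M] [Module R M] [AddCommGroup N] [Module R N]

theorem map_cycle (f : M [⋀^Fin 3]→ₗ[R] N) (x y z : M) : f ![y, z, x] = f ![x, y, z] := by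
  have h := f.map_perm ![x, y, z] (finRotate 3)
  rw [sign_finRotate] at h
  convert h using 2
  · ext i; fin_cases i <;> rfl
  · simp

theorem map_swap_tail (f : M [⋀^Fin 3]→ₗ[R] N) (x y z : M) : f ![x, z, y] = -f ![x, y, z] := by
  convert f.map_swap ![x, y, z] (show (1 : Fin 3) ≠ 2 by decide) using 2
  ext i; fin_cases i <;> rfl

theorem eq_zero_of_apply_basis_lt {ι : Type*} [LinearOrder ι] (e : Basis ι R M)
    (g : M [⋀^Fin 2]→ₗ[R] N) (h : ∀ i j, i < j → g ![e i, e j] = 0) : g = 0 := by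
  refine e.ext_alternating fun v hv => ?_
  have hv' : (fun i => e (v i)) = ![e (v 0), e (v 1)] := by ext i; fin_cases i <;> rfl
  rw [hv', zero_apply]
  rcases lt_or_gt_of_ne (hv.ne (show (0 : Fin 2) ≠ 1 by decide)) with hlt | hgt
  · exact h _ _ hlt
  · have hswap : g ![e (v 0), e (v 1)] = -g ![e (v 1), e (v 0)] := by
      convert g.map_swap ![e (v 1), e (v 0)] (show (0 : Fin 2) ≠ 1 by decide) using 2
      ext i; fin_cases i <;> rfl
    rw [hswap, h _ _ hgt, neg_zero]

@[simp]
theorem map_eq_zero_of_eq_01 (f : M [⋀^Fin 3]→ₗ[R] N) (x y : M) : f ![x, x, y] = 0 :=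
  f.map_eq_zero_of_eq _ (i := 0) (j := 1) rfl (by decide)

@[simp]
theorem map_eq_zero_of_eq_02 (f : M [⋀^Fin 3]→ₗ[R] N) (x y : M) : f ![x, y, x] = 0 :=
  f.map_eq_zero_of_eq _ (i := 0) (j := 2) rfl (by decide)

@[simp]
theorem map_eq_zero_of_eq_12 (f : M [⋀^Fin 3]→ₗ[R] N) (x y : M) : f ![x, y, y] = 0 :=
  f.map_eq_zero_of_eq _ (i := 1) (j := 2) rfl (by decide)

def nucleus {n : ℕ} (f : M [⋀^Fin (n + 1)]→ₗ[R] N) : Submodule R M :=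
  LinearMap.ker f.curryLeft

theorem mem_nucleus_iff (f : M [⋀^Fin 3]→ₗ[R] N) {v : M} :
    v ∈ f.nucleus ↔ ∀ w u, f ![v, w, u] = 0 :=
  LinearMap.mem_ker.trans <| AlternatingMap.ext_iff.trans (FinVec.forall_iff _).symm

end CommRing

section Field

variable {K V : Type*} [Field K] [AddCommGroup V] [Module K V] (f : V [⋀^Fin 3]→ₗ[K] K)

theorem exists_apply_eq_one (hf : f ≠ 0) : ∃ a b c, f ![a, b, c] = 1 := by
  obtain ⟨m, hm⟩ : ∃ m, f m ≠ 0 := by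
    by_contra! h
    exact hf (AlternatingMap.ext h)
  refine ⟨(f m)⁻¹ • m 0, m 1, m 2, ?_⟩
  rw [← curryLeft_apply_apply, map_smul, smul_apply, curryLeft_apply_apply, smul_eq_mul,
    show ![m 0, m 1, m 2] = m from FinVec.etaExpand_eq m, inv_mul_cancel₀ hm]

def tripleCoord (a b c : V) : V →ₗ[K] Fin 3 → K where
  toFun v := ![f ![v, b, c], f ![v, c, a], f ![v, a, b]]
  map_add' x y := by ext i; fin_cases i <;> simp [f.map_vecCons_add]
  map_smul' t x := by ext i; fin_cases i <;> simp [f.map_vecCons_smul]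

theorem tripleCoord_apply_eq_single {a b c : V} (h : f ![a, b, c] = 1) (i : Fin 3) :
    f.tripleCoord a b c (![a, b, c] i) = Pi.single i 1 := by
  have hbca : f ![b, c, a] = 1 := f.map_cycle a b c ▸ h
  have hcab : f ![c, a, b] = 1 := f.map_cycle b c a ▸ hbca
  ext j
  fin_cases i <;> fin_cases j <;> simp [tripleCoord, h, hbca, hcab]

theorem nucleus_le_ker_tripleCoord (a b c : V) :
    f.nucleus ≤ LinearMap.ker (f.tripleCoord a b c) :=
  fun v hv => by
    rw [mem_nucleus_iff] at hv
    ext i; fin_cases i <;> simp [tripleCoord, hv]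

theorem mem_nucleus_of_mem_ker_tripleCoord {a b c d : V} (e : Basis (Fin 4) K V)
    (he : ⇑e = ![a, b, c, d]) (hd : d ∈ LinearMap.ker (f.tripleCoord a b c)) : d ∈ f.nucleus := by
  have hbc : f ![d, b, c] = 0 := congrFun hd 0
  have hca : f ![d, c, a] = 0 := congrFun hd 1
  have hab : f ![d, a, b] = 0 := congrFun hd 2
  have hac : f ![d, a, c] = 0 := by rw [map_swap_tail, hca, neg_zero]
  refine eq_zero_of_apply_basis_lt e _ fun i j hij => ?_
  fin_cases i <;> fin_cases j <;> simp [he, hab, hac, hbc] at hij ⊢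

theorem finrank_nucleus_eq_one_and_exists_basis (hdim : finrank K V = 4) (hf : f ≠ 0) :
    finrank K f.nucleus = 1 ∧
      ∃ e : Basis (Fin 4) K V, f ![e 0, e 1, e 2] = 1 ∧ e 3 ∈ f.nucleus := by
  have : FiniteDimensional K V := .of_finrank_pos (by omega)
  obtain ⟨a, b, c, habc⟩ := f.exists_apply_eq_one hf
  set π := f.tripleCoord a b c
  have hπ := f.tripleCoord_apply_eq_single habc
  have hker : finrank K (LinearMap.ker π) = 1 := by
    have := π.finrank_range_add_finrank_ker
    rw [LinearMap.range_eq_top.2 (LinearMap.surjective_of_apply_eq_single hπ), finrank_top,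
      finrank_fin_fun, hdim] at this
    omega
  obtain ⟨d, hd, hd₀⟩ := (LinearMap.ker π).exists_mem_ne_zero_of_ne_bot fun h => by
    rw [h, finrank_bot] at hker; omega
  have hli : LinearIndependent K ![a, b, c, d] := by
    convert LinearIndependent.finSnoc_of_apply_eq_single hπ hd hd₀ using 1
    ext i; fin_cases i <;> rfl
  let e := basisOfLinearIndependentOfCardEqFinrank hli (by simp [hdim])
  have he : ⇑e = ![a, b, c, d] := coe_basisOfLinearIndependentOfCardEqFinrank hli _
  have hdN : d ∈ f.nucleus := f.mem_nucleus_of_mem_ker_tripleCoord e he hd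
  refine ⟨le_antisymm ?_ ?_, e, by simpa [he] using habc, by simpa [he] using hdN⟩
  · exact hker ▸ Submodule.finrank_mono (f.nucleus_le_ker_tripleCoord a b c)
  · calc 1 = finrank K (K ∙ d) := (finrank_span_singleton hd₀).symm
      _ ≤ finrank K f.nucleus := Submodule.finrank_mono ((span_singleton_le_iff_mem _ _).2 hdN)

end Field

end AlternatingMap

/-- The Lemma at the start of Section 3.2: if `V` is a 4-dimensional `F₂`-vector space
with a nonzero alternating trilinear form `f`, then the nucleus
`N = {v | f(v,·,·) = 0}` is 1-dimensional, and there is a basis `(a,b,c,d)` of `V`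
with `f(a,b,c) = 1` and `d ∈ N`. -/
theorem stmt6 (V : Type*) [AddCommGroup V] [Module (ZMod 2) V]
    (hdim : Module.finrank (ZMod 2) V = 4)
    (f : AlternatingMap (ZMod 2) V (ZMod 2) (Fin 3)) (hf : f ≠ 0) :
    ∃ N : Submodule (ZMod 2) V,
      (∀ v : V, v ∈ N ↔ ∀ w u : V, f ![v, w, u] = 0) ∧
      Module.finrank (ZMod 2) N = 1 ∧
      ∃ b : Module.Basis (Fin 4) (ZMod 2) V, f ![b 0, b 1, b 2] = 1 ∧ b 3 ∈ N :=
  ⟨f.nucleus, fun _ => f.mem_nucleus_iff, f.finrank_nucleus_eq_one_and_exists_basis hdim hf⟩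
end

section
/- The right action of GL(W₃) on Q₃ given by q ↦ q ∘ φ has exactly 5 orbits, and the cardinalities of these orbits are 1, 7, 7, 21 and 28 (so in particular Q₃ has exactly 64 elements). -/
/-- `W₃ = Fin 3 → ZMod 2`. -/
abbrev W3 := Fin 3 → ZMod 2

/-- The determinant trilinear form on `W₃`. -/
def T3 (x y z : W3) : ZMod 2 := Matrix.det (Matrix.of ![x, y, z])

/-- `Q₃`: the set of functions `q : W₃ → ZMod 2` with `q 0 = 0` whose third
polarization is the determinant form `T₃`. -/
def Q3 : Set (W3 → ZMod 2) :=
  {q | q 0 = 0 ∧ ∀ x y z : W3,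
    q (x + y + z) + q (x + y) + q (x + z) + q (y + z) + q x + q y + q z = T3 x y z}

/-- The orbit of `q` under the right action of `GL(W₃)` by precomposition. -/
def orbit3 (q : W3 → ZMod 2) : Set (W3 → ZMod 2) :=
  {q' | ∃ φ : (W3 →ₗ[ZMod 2] W3)ˣ, q' = fun x => q (φ.val x)}

/-!
`GL(W₃)` acts through matrices of nonzero determinant, and `T₃` transforms by the determinant,
which is `1` over `ZMod 2`; so the action preserves `Q₃`. Conversely, the defining identity at the
standard basis says that `q 0 = 0` and that the values of `q` at the seven nonzero vectors sum to
`1`. A finite computation shows that these 64 truth tables are covered by the orbits of five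
explicit representatives, and computes these orbits: they are pairwise distinct, of sizes
1, 7, 7, 21, 28. Hence `Q₃` is their disjoint union and has `1 + 7 + 7 + 21 + 28 = 64` elements.
-/

open Matrix Function

def polarization3 (q : W3 → ZMod 2) (x y z : W3) : ZMod 2 :=
  q (x + y + z) + q (x + y) + q (x + z) + q (y + z) + q x + q y + q z

theorem T3_mulVec (M : Matrix (Fin 3) (Fin 3) (ZMod 2)) (x y z : W3) :
    T3 (M *ᵥ x) (M *ᵥ y) (M *ᵥ z) = M.det * T3 x y z := by
  have h : Matrix.of ![M *ᵥ x, M *ᵥ y, M *ᵥ z] = Matrix.of ![x, y, z] * Mᵀ := by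
    ext i j
    fin_cases i <;> simp [mulVec, dotProduct, mul_apply, mul_comm]
  rw [T3, h, det_mul, det_transpose, mul_comm, T3]

theorem comp_mulVec_mem_Q3 {q : W3 → ZMod 2} (hq : q ∈ Q3) {M : Matrix (Fin 3) (Fin 3) (ZMod 2)}
    (hM : M.det ≠ 0) : (fun x => q (M *ᵥ x)) ∈ Q3 := by
  refine ⟨by simpa using hq.1, fun x y z => ?_⟩
  simp only [mulVec_add]
  have hdet : M.det = 1 := by
    generalize M.det = d at hM
    decide +revert
  rw [hq.2, T3_mulVec, hdet, one_mul]

theorem orbit3_eq_setOf_mulVec (q : W3 → ZMod 2) :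
    orbit3 q = {q' | ∃ M : Matrix (Fin 3) (Fin 3) (ZMod 2), M.det ≠ 0 ∧
      q' = fun x => q (M *ᵥ x)} := by
  ext q'
  constructor
  · rintro ⟨φ, rfl⟩
    obtain ⟨A, rfl⟩ := GeneralLinearGroup.toLin.surjective φ
    exact ⟨A, GeneralLinearGroup.det_ne_zero A, rfl⟩
  · rintro ⟨M, hM, rfl⟩
    exact ⟨GeneralLinearGroup.toLin (GeneralLinearGroup.mkOfDetNeZero M hM), rfl⟩

theorem orbit3_subset_Q3 {q : W3 → ZMod 2} (hq : q ∈ Q3) : orbit3 q ⊆ Q3 := by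
  rw [orbit3_eq_setOf_mulVec]
  rintro _ ⟨M, hM, rfl⟩
  exact comp_mulVec_mem_Q3 hq hM

theorem mem_orbit3_self (q : W3 → ZMod 2) : q ∈ orbit3 q := ⟨1, rfl⟩

theorem orbit3_eq_of_mem {q q' : W3 → ZMod 2} (h : q' ∈ orbit3 q) : orbit3 q' = orbit3 q := by
  obtain ⟨φ, rfl⟩ := h
  ext q''
  constructor
  · rintro ⟨ψ, rfl⟩
    exact ⟨φ * ψ, rfl⟩
  · rintro ⟨ψ, rfl⟩
    refine ⟨φ⁻¹ * ψ, funext fun x => ?_⟩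
    simp [← Module.End.mul_apply, ← Units.val_mul]

def orbitFinset (q : W3 → ZMod 2) : Finset (W3 → ZMod 2) :=
  (Finset.univ.filter fun M : Matrix (Fin 3) (Fin 3) (ZMod 2) => M.det ≠ 0).image
    fun M x => q (M *ᵥ x)

theorem coe_orbitFinset (q : W3 → ZMod 2) : (orbitFinset q : Set (W3 → ZMod 2)) = orbit3 q := by
  ext q'
  simp [orbitFinset, orbit3_eq_setOf_mulVec, eq_comm]

theorem ncard_orbit3 (q : W3 → ZMod 2) : (orbit3 q).ncard = (orbitFinset q).card := by
  rw [← coe_orbitFinset, Set.ncard_coe_finset]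

/-- Each representative is `x₀x₁x₂` plus a quadratic function; `rep 0` is the indicator of
`x ≠ 0`. -/
def rep : Fin 5 → W3 → ZMod 2 :=
  ![fun x => x 0 * x 1 * x 2 + x 0 * x 1 + x 0 * x 2 + x 1 * x 2 + x 0 + x 1 + x 2,
    fun x => x 0 * x 1 * x 2,
    fun x => x 0 * x 1 * x 2 + x 0 * x 1 + x 0 * x 2 + x 1 * x 2,
    fun x => x 0 * x 1 * x 2 + x 1 * x 2 + x 0,
    fun x => x 0 * x 1 * x 2 + x 0 * x 1 + x 0 * x 2]

theorem rep_mem_Q3 : ∀ i, rep i ∈ Q3 := by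
  simp only [Q3, T3, Set.mem_ofPred_eq]
  decide +kernel

theorem card_orbitFinset_rep : ∀ i, (orbitFinset (rep i)).card = ![1, 7, 7, 21, 28] i := by
  decide +kernel

theorem eq_of_rep_mem_orbitFinset_rep : ∀ i j, rep j ∈ orbitFinset (rep i) → i = j := by
  decide +kernel

def binaryIndex : W3 ≃ Fin 8 := finFunctionFinEquiv

/-- `decide` enumerates functions on `W₃` through their truth tables `v : Fin 8 → ZMod 2`. -/
theorem exists_mem_orbitFinset_rep : ∀ v : Fin 8 → ZMod 2,
    (v ∘ binaryIndex) 0 = 0 →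
    polarization3 (v ∘ binaryIndex) (Pi.single 0 1) (Pi.single 1 1) (Pi.single 2 1) = 1 →
    ∃ i, v ∘ binaryIndex ∈ orbitFinset (rep i) := by
  decide +kernel

theorem exists_mem_orbit3_rep {q : W3 → ZMod 2} (hq : q ∈ Q3) :
    ∃ i, q ∈ orbit3 (rep i) := by
  have hT : T3 (Pi.single 0 1) (Pi.single 1 1) (Pi.single 2 1) = 1 := by decide +kernel
  have h := exists_mem_orbitFinset_rep (q ∘ binaryIndex.symm)
  rw [comp_assoc, Equiv.symm_comp_self, comp_id] at h
  simp only [← coe_orbitFinset, Finset.mem_coe]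
  exact h hq.1 ((hq.2 _ _ _).trans hT)

theorem Q3_eq_iUnion_orbit3_rep : Q3 = ⋃ i, orbit3 (rep i) :=
  (Set.iUnion_subset fun i => orbit3_subset_Q3 (rep_mem_Q3 i)).antisymm'
    fun _ hq => Set.mem_iUnion.2 (exists_mem_orbit3_rep hq)

theorem orbit3_rep_injective : Injective fun i => orbit3 (rep i) := by
  intro i j (h : orbit3 (rep i) = orbit3 (rep j))
  apply eq_of_rep_mem_orbitFinset_rep
  rw [← Finset.mem_coe, coe_orbitFinset, h]
  exact mem_orbit3_self (rep j)

theorem pairwise_disjoint_orbit3_rep : Pairwise (Disjoint on fun i => orbit3 (rep i)) :=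
  fun _ _ hij => Set.disjoint_left.2 fun _ hi hj =>
    hij (orbit3_rep_injective ((orbit3_eq_of_mem hi).symm.trans (orbit3_eq_of_mem hj)))

theorem setOf_orbit3_eq_range :
    {S | ∃ q ∈ Q3, S = orbit3 q} = Set.range fun i => orbit3 (rep i) := by
  ext S
  constructor
  · rintro ⟨q, hq, rfl⟩
    obtain ⟨i, hi⟩ := exists_mem_orbit3_rep hq
    exact ⟨i, (orbit3_eq_of_mem hi).symm⟩
  · rintro ⟨i, rfl⟩
    exact ⟨rep i, rep_mem_Q3 i, rfl⟩

theorem ncard_orbit3_rep (i : Fin 5) : (orbit3 (rep i)).ncard = ![1, 7, 7, 21, 28] i := by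
  rw [ncard_orbit3, card_orbitFinset_rep]

theorem ncard_Q3 : Q3.ncard = 64 := by
  rw [Q3_eq_iUnion_orbit3_rep, Set.ncard_iUnion_of_finite (fun _ => Set.toFinite _)
    pairwise_disjoint_orbit3_rep, finsum_eq_sum_of_fintype, Fin.sum_univ_five]
  simp [ncard_orbit3_rep]

/-- Theorem 3.1 / Proposition 3.2: the action of `GL(W₃)` on `Q₃` has exactly 5
orbits, of cardinalities 1, 7, 7, 21 and 28; in particular `Q₃` has 64 elements. -/
theorem stmt7 : ∃ q1 q2 q3 q4 q5 : W3 → ZMod 2,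
    q1 ∈ Q3 ∧ q2 ∈ Q3 ∧ q3 ∈ Q3 ∧ q4 ∈ Q3 ∧ q5 ∈ Q3 ∧
    {S : Set (W3 → ZMod 2) | ∃ q ∈ Q3, S = orbit3 q} =
      {orbit3 q1, orbit3 q2, orbit3 q3, orbit3 q4, orbit3 q5} ∧
    ({orbit3 q1, orbit3 q2, orbit3 q3, orbit3 q4, orbit3 q5} :
      Set (Set (W3 → ZMod 2))).ncard = 5 ∧
    (orbit3 q1).ncard = 1 ∧ (orbit3 q2).ncard = 7 ∧ (orbit3 q3).ncard = 7 ∧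
    (orbit3 q4).ncard = 21 ∧ (orbit3 q5).ncard = 28 ∧ Q3.ncard = 64 := by
  have hrange : (Set.range fun i => orbit3 (rep i)) =
      {orbit3 (rep 0), orbit3 (rep 1), orbit3 (rep 2), orbit3 (rep 3), orbit3 (rep 4)} := by
    ext S
    simp [Fin.exists_fin_succ, eq_comm]
  refine ⟨rep 0, rep 1, rep 2, rep 3, rep 4, rep_mem_Q3 0, rep_mem_Q3 1, rep_mem_Q3 2,
    rep_mem_Q3 3, rep_mem_Q3 4, by rw [setOf_orbit3_eq_range, hrange], ?_,
    ncard_orbit3_rep 0, ncard_orbit3_rep 1, ncard_orbit3_rep 2, ncard_orbit3_rep 3,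
    ncard_orbit3_rep 4, ncard_Q3⟩
  rw [← hrange, Set.ncard_range_of_injective orbit3_rep_injective, Nat.card_fin]
end

section
/- Let q₂ ∈ Q₃ be the indicator function of the vector (1,1,1), i.e., q₂(x) = 1 if x = (1,1,1) and q₂(x) = 0 otherwise. Then the stabilizer subgroup {φ ∈ GL(W₃) | q₂ ∘ φ = q₂} is isomorphic (as a group) to the symmetric group S₄ on four letters. -/
/-- The stabilizer `{φ ∈ GL(W₃) | q ∘ φ = q}` of `q : W₃ → ZMod 2` under the
action of `GL(W₃)` by precomposition. -/
def stab3 (q : W3 → ZMod 2) : Subgroup (W3 →ₗ[ZMod 2] W3)ˣ where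
  carrier := {φ | ∀ x, q (φ.val x) = q x}
  one_mem' := by intro x; rfl
  mul_mem' := by
    intro a b ha hb x
    have h : (a * b).val x = a.val (b.val x) := rfl
    rw [h, ha, hb]
  inv_mem' := by
    intro a ha x
    have h1 : a.val ((a⁻¹).val x) = x := by
      have h : a.val * (a⁻¹).val = (1 : W3 →ₗ[ZMod 2] W3) := Units.mul_inv a
      calc a.val ((a⁻¹).val x) = (a.val * (a⁻¹).val) x := rfl
        _ = x := by rw [h]; rfl
    calc q ((a⁻¹).val x) = q (a.val ((a⁻¹).val x)) := (ha _).symm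
      _ = q x := by rw [h1]

/-- `q₂` is the indicator function of the vector `(1,1,1)`. -/
def q2 : W3 → ZMod 2 := fun x => if x = ![1, 1, 1] then 1 else 0

namespace Stmt8Aux

def wv : Fin 4 → W3 := ![![1,0,0], ![0,1,0], ![0,0,1], ![1,1,1]]

def B (σ : Equiv.Perm (Fin 4)) : Matrix (Fin 3) (Fin 3) (ZMod 2) :=
  Matrix.of fun i j => wv (σ i.castSucc) j

lemma hB : ∀ σ τ : Equiv.Perm (Fin 4), B (σ * τ) = B τ * B σ := by decide

lemma hB1 : B 1 = 1 := by decide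

lemma hq : ∀ σ : Equiv.Perm (Fin 4), ∀ x : W3, q2 ((B σ).mulVec x) = q2 x := by decide

lemma hBinj : ∀ σ τ : Equiv.Perm (Fin 4), B σ = B τ → σ = τ := by decide

def U (σ : Equiv.Perm (Fin 4)) : (Matrix (Fin 3) (Fin 3) (ZMod 2))ˣ where
  val := B σ
  inv := B σ⁻¹
  val_inv := (hB σ⁻¹ σ).symm.trans (by rw [inv_mul_cancel, hB1])
  inv_val := (hB σ σ⁻¹).symm.trans (by rw [mul_inv_cancel, hB1])

def E : (Matrix (Fin 3) (Fin 3) (ZMod 2))ˣ ≃* (W3 →ₗ[ZMod 2] W3)ˣ :=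
  Units.mapEquiv Matrix.toLinAlgEquiv'.toRingEquiv.toMulEquiv

lemma E_apply (u : (Matrix (Fin 3) (Fin 3) (ZMod 2))ˣ) (x : W3) :
    (E u).val x = u.val.mulVec x := rfl

def μ : Equiv.Perm (Fin 4) →* (Matrix (Fin 3) (Fin 3) (ZMod 2))ˣ :=
  MonoidHom.mk' (fun σ => U σ⁻¹)
    (fun σ τ => Units.ext (by
      show B (σ * τ)⁻¹ = B σ⁻¹ * B τ⁻¹
      rw [mul_inv_rev, hB]))

def big : Equiv.Perm (Fin 4) →* (W3 →ₗ[ZMod 2] W3)ˣ :=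
  E.toMonoidHom.comp μ

lemma hmem : ∀ σ : Equiv.Perm (Fin 4), big σ ∈ stab3 q2 := by
  intro σ x
  exact hq σ⁻¹ x

def ρ : Equiv.Perm (Fin 4) →* stab3 q2 :=
  big.codRestrict (stab3 q2) hmem

lemma ρ_inj : Function.Injective ρ := by
  intro σ τ h
  have h1 : big σ = big τ := Subtype.ext_iff.1 h
  have h2 : μ σ = μ τ := E.injective h1
  have h3 : B σ⁻¹ = B τ⁻¹ := congrArg Units.val h2
  have := hBinj _ _ h3
  exact inv_injective this

abbrev S := {M : Matrix (Fin 3) (Fin 3) (ZMod 2) // M.det = 1 ∧ ∀ x, q2 (M.mulVec x) = q2 x}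

lemma zmod2_unit_eq_one : ∀ a : ZMod 2, a ≠ 0 → a = 1 := by decide

noncomputable def e : stab3 q2 ≃ S where
  toFun φ :=
    ⟨(E.symm φ.val).val,
      by
        have hu : IsUnit (E.symm φ.val).val.det :=
          (Matrix.isUnit_iff_isUnit_det _).1 (E.symm φ.val).isUnit
        exact zmod2_unit_eq_one _ hu.ne_zero,
      fun x => by
        have h := E.apply_symm_apply φ.val
        calc q2 ((E.symm φ.val).val.mulVec x) = q2 ((E (E.symm φ.val)).val x) := rfl
          _ = q2 (φ.val.val x) := by rw [h]
          _ = q2 x := φ.2 x⟩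
  invFun M :=
    ⟨E (Matrix.nonsingInvUnit M.val (by rw [M.2.1]; exact isUnit_one)),
      fun x => M.2.2 x⟩
  left_inv φ := by
    apply Subtype.ext
    have key : ∀ (u : (Matrix (Fin 3) (Fin 3) (ZMod 2))ˣ) (h : IsUnit u.val.det),
        Matrix.nonsingInvUnit u.val h = u := fun u h => Units.ext rfl
    show E (Matrix.nonsingInvUnit _ _) = φ.val
    rw [key]
    exact E.apply_symm_apply φ.val
  right_inv M := by
    apply Subtype.ext
    show (E.symm (E _)).val = M.val
    rw [E.symm_apply_apply]
    rfl

lemma cardS : Fintype.card S = 24 := by decide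

lemma cardPerm : Fintype.card (Equiv.Perm (Fin 4)) = 24 := by decide

end Stmt8Aux

/-- Proposition 3.3(2): the stabilizer of `q₂` (i.e. `Out C₂³`) is isomorphic
to the symmetric group `S₄`. -/
theorem stmt8 : Nonempty (stab3 q2 ≃* Equiv.Perm (Fin 4)) := by
  classical
  letI : Fintype (stab3 q2) := Fintype.ofEquiv _ Stmt8Aux.e.symm
  have hcard : Fintype.card (stab3 q2) = Fintype.card (Equiv.Perm (Fin 4)) := by
    rw [Fintype.card_congr Stmt8Aux.e, Stmt8Aux.cardS, Stmt8Aux.cardPerm]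
  have hbij : Function.Bijective Stmt8Aux.ρ :=
    (Fintype.bijective_iff_injective_and_card _).2 ⟨Stmt8Aux.ρ_inj, hcard.symm⟩
  exact ⟨(MulEquiv.ofBijective Stmt8Aux.ρ hbij).symm⟩
end

section
/- Let q₄ ∈ Q₃ be the function determined by q₄(e₁) = 1, q₄(e₂) = 1, q₄(e₃) = 0, q₄(e₁+e₂) = 0, q₄(e₁+e₃) = 1, q₄(e₂+e₃) = 1, q₄(e₁+e₂+e₃) = 1 and q₄(0) = 0. Then the stabilizer subgroup {φ ∈ GL(W₃) | q₄ ∘ φ = q₄} is isomorphic (as a group) to the dihedral group of order 8. -/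
/-- `q₄`: the function on `W₃` with `q₄(e₁) = q₄(e₂) = 1`, `q₄(e₃) = 0`,
`q₄(e₁+e₂) = 0`, `q₄(e₁+e₃) = q₄(e₂+e₃) = q₄(e₁+e₂+e₃) = 1`, `q₄(0) = 0`
(characteristic vector `(110000)` of `C₄³`). -/
def q4 : W3 → ZMod 2 := fun x =>
  if x = ![1, 0, 0] then 1
  else if x = ![0, 1, 0] then 1
  else if x = ![0, 0, 1] then 0
  else if x = ![1, 1, 0] then 0
  else if x = ![1, 0, 1] then 1
  else if x = ![0, 1, 1] then 1
  else if x = ![1, 1, 1] then 1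
  else 0

instance : DecidableEq (W3 →ₗ[ZMod 2] W3) := fun f g =>
  decidable_of_iff (∀ x, f x = g x) ⟨fun h => LinearMap.ext h, fun h x => by rw [h]⟩

instance : DecidableEq (W3 →ₗ[ZMod 2] W3)ˣ := fun u v =>
  decidable_of_iff (u.val = v.val) Units.ext_iff.symm

/-- The linear map with prescribed images `a, b, c` of the standard basis. -/
def mk3 (a b c : W3) : W3 →ₗ[ZMod 2] W3 where
  toFun := fun x => x 0 • a + x 1 • b + x 2 • c
  map_add' := by intro x y; simp only [Pi.add_apply, add_smul]; abel
  map_smul' := by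
    intro t x
    simp only [Pi.smul_apply, smul_eq_mul, RingHom.id_apply, smul_add, mul_smul]

/-- An order-4 element of the stabilizer of `q₄`. -/
def Ru : (W3 →ₗ[ZMod 2] W3)ˣ :=
  ⟨mk3 ![0,1,0] ![0,1,1] ![1,1,0], mk3 ![1,0,1] ![1,0,0] ![1,1,0],
   by decide, by decide⟩

/-- An order-2 element of the stabilizer of `q₄`. -/
def Su : (W3 →ₗ[ZMod 2] W3)ˣ :=
  ⟨mk3 ![0,1,0] ![1,0,0] ![0,0,1], mk3 ![0,1,0] ![1,0,0] ![0,0,1],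
   by decide, by decide⟩

/-- The dihedral parametrization of the stabilizer of `q₄`. -/
def dihF : DihedralGroup 4 → (W3 →ₗ[ZMod 2] W3)ˣ
  | .r i => Ru ^ i.val
  | .sr i => Su * Ru ^ i.val

lemma dihF_mul : ∀ g h : DihedralGroup 4, dihF (g * h) = dihF g * dihF h := by decide

lemma dihF_inj : ∀ g h : DihedralGroup 4, dihF g = dihF h → g = h := by decide

lemma dihF_mem : ∀ g : DihedralGroup 4, ∀ x, q4 ((dihF g).val x) = q4 x := by decide

lemma key : ∀ a b c : W3, (∀ x : W3, q4 (x 0 • a + x 1 • b + x 2 • c) = q4 x) →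
    ∃ g : DihedralGroup 4, (dihF g).val = mk3 a b c := by decide

lemma basis_decomp : ∀ x : W3,
    x = x 0 • (![1,0,0] : W3) + x 1 • (![0,1,0] : W3) + x 2 • (![0,0,1] : W3) := by decide

/-- The monoid hom from `DihedralGroup 4` to the stabilizer. -/
def dihHom : DihedralGroup 4 →* stab3 q4 :=
  MonoidHom.mk' (fun g => ⟨dihF g, dihF_mem g⟩)
    (fun g h => Subtype.ext (dihF_mul g h))

lemma dihHom_bij : Function.Bijective dihHom := by
  constructor
  · intro g h hgh
    exact dihF_inj g h (congrArg Subtype.val hgh)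
  · rintro ⟨φ, hφ⟩
    have hval : φ.val = mk3 (φ.val ![1,0,0]) (φ.val ![0,1,0]) (φ.val ![0,0,1]) := by
      apply LinearMap.ext
      intro x
      conv_lhs => rw [basis_decomp x]
      simp only [map_add, map_smul, mk3, LinearMap.coe_mk, AddHom.coe_mk]
    have hq : ∀ x : W3, q4 (x 0 • φ.val ![1,0,0] + x 1 • φ.val ![0,1,0]
        + x 2 • φ.val ![0,0,1]) = q4 x := by
      intro x
      have := hφ x
      rw [hval] at this
      exact this
    obtain ⟨g, hg⟩ := key _ _ _ hq
    have hu : dihF g = φ := Units.ext (hg.trans hval.symm)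
    exact ⟨g, Subtype.ext hu⟩

/-- Proposition 3.3(4): the stabilizer of `q₄` (i.e. `Out C₄³`) is isomorphic
to the dihedral group of order 8. -/
theorem stmt9 : Nonempty (stab3 q4 ≃* DihedralGroup 4) :=
  ⟨(MulEquiv.ofBijective dihHom dihHom_bij).symm⟩
end

section
/- Let q₅ ∈ Q₃ be the function determined by q₅(e₁) = 1, q₅(e₂) = 0, q₅(e₃) = 0, q₅(e₁+e₂) = 1, q₅(e₁+e₃) = 1, q₅(e₂+e₃) = 0, q₅(e₁+e₂+e₃) = 0 and q₅(0) = 0. Then the stabilizer subgroup {φ ∈ GL(W₃) | q₅ ∘ φ = q₅} is isomorphic (as a group) to the symmetric group S₃ on three letters. -/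
/-- `q₅`: the function on `W₃` with `q₅(e₁) = 1`, `q₅(e₂) = q₅(e₃) = 0`,
`q₅(e₁+e₂) = q₅(e₁+e₃) = 1`, `q₅(e₂+e₃) = q₅(e₁+e₂+e₃) = 0`, `q₅(0) = 0`
(characteristic vector `(100000)` of `C₅³`). -/
def q5 : W3 → ZMod 2 := fun x =>
  if x = ![1, 0, 0] then 1
  else if x = ![0, 1, 0] then 0
  else if x = ![0, 0, 1] then 0
  else if x = ![1, 1, 0] then 1
  else if x = ![1, 0, 1] then 1
  else if x = ![0, 1, 1] then 0
  else if x = ![1, 1, 1] then 0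
  else 0

def v : Fin 3 → W3 := ![![1,0,0], ![1,1,0], ![1,0,1]]
def Cm : Matrix (Fin 3) (Fin 3) (ZMod 2) := ![![1,1,1],![0,1,0],![0,0,1]]
def Mm (σ : Equiv.Perm (Fin 3)) : Matrix (Fin 3) (Fin 3) (ZMod 2) :=
  Matrix.of fun i j => ∑ k : Fin 3, v (σ k) i * Cm k j
lemma Mm_one : Mm 1 = 1 := by decide
lemma Mm_mul : ∀ σ τ, Mm (σ * τ) = Mm σ * Mm τ := by decide
lemma key1 : ∀ (σ : Equiv.Perm (Fin 3)) (x : W3), q5 ((Mm σ).mulVec x) = q5 x := by decide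
lemma key2 : ∀ (σ : Equiv.Perm (Fin 3)) i, (Mm σ).mulVec (v i) = v (σ i) := by decide
lemma key3 : ∀ σ : Equiv.Perm (Fin 3), Mm σ = 1 → σ = 1 := by decide
lemma key4 : ∀ x : W3, x = (x 0 + x 1 + x 2) • v 0 + x 1 • v 1 + x 2 • v 2 := by decide
lemma qmem : ∀ x : W3, q5 x = 1 → ∃ j, x = v j := by decide
lemma v_inj : ∀ i j, v i = v j → i = j := by decide
lemma q5_v : ∀ i, q5 (v i) = 1 := by decide

def Mu (σ : Equiv.Perm (Fin 3)) : (Matrix (Fin 3) (Fin 3) (ZMod 2))ˣ :=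
  ⟨Mm σ, Mm σ⁻¹, by rw [← Mm_mul, mul_inv_cancel, Mm_one], by rw [← Mm_mul, inv_mul_cancel, Mm_one]⟩

def permHomU : Equiv.Perm (Fin 3) →* (Matrix (Fin 3) (Fin 3) (ZMod 2))ˣ where
  toFun := Mu
  map_one' := Units.ext Mm_one
  map_mul' a b := Units.ext (Mm_mul a b)

def ψ0 : Equiv.Perm (Fin 3) →* (W3 →ₗ[ZMod 2] W3)ˣ :=
  (Units.map (Matrix.toLinAlgEquiv' (R := ZMod 2) (n := Fin 3)).toAlgHom.toMonoidHom).comp permHomU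

lemma ψ0_val (σ : Equiv.Perm (Fin 3)) (x : W3) : (ψ0 σ).val x = (Mm σ).mulVec x := by
  show (Matrix.toLinAlgEquiv' (Mm σ)) x = _
  rw [Matrix.toLinAlgEquiv'_apply]

lemma eq_of_v (L1 L2 : W3 →ₗ[ZMod 2] W3) (h : ∀ i, L1 (v i) = L2 (v i)) : L1 = L2 := by
  refine LinearMap.ext fun x => ?_
  rw [key4 x]
  simp only [map_add, map_smul, h]

lemma ψ0_mem (σ : Equiv.Perm (Fin 3)) : ψ0 σ ∈ stab3 q5 := by
  intro x
  rw [ψ0_val, key1]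

def ψ : Equiv.Perm (Fin 3) →* stab3 q5 := ψ0.codRestrict _ ψ0_mem

lemma ψ_inj : Function.Injective ψ := by
  rw [injective_iff_map_eq_one]
  intro σ h
  apply key3
  have h1 : ψ0 σ = 1 := congrArg Subtype.val h
  have h2 : (ψ0 σ).val = 1 := congrArg Units.val h1
  have : Matrix.toLinAlgEquiv' (R := ZMod 2) (n := Fin 3) (Mm σ) = Matrix.toLinAlgEquiv' 1 := by
    rw [map_one]; exact h2
  exact Matrix.toLinAlgEquiv'.injective this

lemma ψ_surj : Function.Surjective ψ := by
  rintro ⟨φ, hφ⟩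
  have hmem : ∀ x, q5 (φ.val x) = q5 x := hφ
  have hchoice : ∀ i : Fin 3, ∃ j, φ.val (v i) = v j := by
    intro i
    exact qmem _ (by rw [hmem, q5_v])
  choose f hf using hchoice
  have hφinj : Function.Injective φ.val := by
    intro a b hab
    have : (φ⁻¹).val (φ.val a) = (φ⁻¹).val (φ.val b) := by rw [hab]
    simpa [← Module.End.mul_apply, φ.inv_mul] using this
  have finj : Function.Injective f := by
    intro a b hab
    apply v_inj
    apply hφinj
    rw [hf, hf, hab]
  have fbij : Function.Bijective f := Finite.injective_iff_bijective.mp finj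
  refine ⟨Equiv.ofBijective f fbij, ?_⟩
  apply Subtype.ext
  apply Units.ext
  apply eq_of_v
  intro i
  rw [hf]
  show (ψ0 (Equiv.ofBijective f fbij)).val (v i) = _
  rw [ψ0_val, key2]
  rfl

/-- Proposition 3.3(5): the stabilizer of `q₅` (i.e. `Out C₅³`) is isomorphic
to the symmetric group `S₃`. -/
theorem stmt10 : Nonempty (stab3 q5 ≃* Equiv.Perm (Fin 3)) := by
  exact ⟨(MulEquiv.ofBijective ψ ⟨ψ_inj, ψ_surj⟩).symm⟩
end

section
/- Let m : ℕ and let V ⊆ (Fin m → ZMod 2) be a doubly even code spanned by linearly independent vectors v₁, v₂, v₃ such that: |v_i| ≡ 4 (mod 8) for i = 1,2,3; |supp v_i ∩ supp v_j| ≡ 2 (mod 4) for 1 ≤ i < j ≤ 3; |supp v₁ ∩ supp v₂ ∩ supp v₃| is odd; and every coordinate k ∈ Fin m lies in the support of some element of V. Then m ≥ 7, and if m = 7 then some permutation of the 7 coordinates maps V onto the code spanned by the indicator vectors of {1,2,3,4}, {1,2,5,6} and {1,3,5,7}. -/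
/-- The support of a vector in `F₂^m`, as a finset of coordinates. -/
def supp {m : ℕ} (v : Fin m → ZMod 2) : Finset (Fin m) :=
  Finset.univ.filter fun k => v k ≠ 0

/-- The indicator vector in `F₂^m` of a set of (1-based) coordinate labels. -/
def indVec {m : ℕ} (S : Finset ℕ) : Fin m → ZMod 2 :=
  fun k => if (k : ℕ) + 1 ∈ S then 1 else 0

/-- The linear automorphism of `F₂^m` permuting coordinates by `π`. -/
def permMap {m : ℕ} (π : Equiv.Perm (Fin m)) :
    (Fin m → ZMod 2) →ₗ[ZMod 2] (Fin m → ZMod 2) where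
  toFun v := v ∘ π
  map_add' _ _ := rfl
  map_smul' _ _ := rfl

private lemma keyLem {m : ℕ} (t : Fin m → ZMod 2 × ZMod 2 × ZMod 2)
    (P : ZMod 2 × ZMod 2 × ZMod 2 → Prop) [DecidablePred P] :
    (Finset.univ.filter fun k => P (t k)).card
      = ∑ s ∈ Finset.univ.filter P, (Finset.univ.filter fun k => t k = s).card := by
  rw [show (Finset.univ.filter fun k => P (t k)) =
      (Finset.univ.filter P).biUnion (fun s => Finset.univ.filter fun k => t k = s) from by
    ext k; simp]
  exact Finset.card_biUnion (by
    intro a _ b hb hab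
    simp [Finset.disjoint_left]
    intro k hk; simp_all)

private lemma sigInj : Function.Injective
    (![(1,1,1),(1,1,0),(1,0,1),(1,0,0),(0,1,1),(0,1,0),(0,0,1)] :
      Fin 7 → ZMod 2 × ZMod 2 × ZMod 2) := by decide

private def sigVec : Fin 7 → ZMod 2 × ZMod 2 × ZMod 2 :=
  ![(1,1,1),(1,1,0),(1,0,1),(1,0,0),(0,1,1),(0,1,0),(0,0,1)]

/-- Theorem 4.4, case of `C₁³` (characteristic vector `(111111)`): a doubly even
code realizing `C₁³` has degree at least 7, and in degree 7 it is, up to a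
permutation of coordinates, the code `V₁ = ⟨(1234), (1256), (1357)⟩`. -/
theorem stmt12 (m : ℕ) (v₁ v₂ v₃ : Fin m → ZMod 2)
    (hli : LinearIndependent (ZMod 2) ![v₁, v₂, v₃])
    (hde4 : ∀ v ∈ Submodule.span (ZMod 2) ({v₁, v₂, v₃} : Set (Fin m → ZMod 2)),
      (supp v).card % 4 = 0)
    (hde2 : ∀ u ∈ Submodule.span (ZMod 2) ({v₁, v₂, v₃} : Set (Fin m → ZMod 2)),
      ∀ v ∈ Submodule.span (ZMod 2) ({v₁, v₂, v₃} : Set (Fin m → ZMod 2)),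
      (supp u ∩ supp v).card % 2 = 0)
    (h1 : (supp v₁).card % 8 = 4) (h2 : (supp v₂).card % 8 = 4)
    (h3 : (supp v₃).card % 8 = 4)
    (h12 : (supp v₁ ∩ supp v₂).card % 4 = 2)
    (h13 : (supp v₁ ∩ supp v₃).card % 4 = 2)
    (h23 : (supp v₂ ∩ supp v₃).card % 4 = 2)
    (h123 : Odd (supp v₁ ∩ supp v₂ ∩ supp v₃).card)
    (hcov : ∀ k : Fin m, ∃ v ∈ Submodule.span (ZMod 2)
      ({v₁, v₂, v₃} : Set (Fin m → ZMod 2)), v k ≠ 0) :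
    7 ≤ m ∧ (m = 7 → ∃ π : Equiv.Perm (Fin m),
      Submodule.map (permMap π)
          (Submodule.span (ZMod 2) ({v₁, v₂, v₃} : Set (Fin m → ZMod 2))) =
        Submodule.span (ZMod 2) ({indVec {1, 2, 3, 4}, indVec {1, 2, 5, 6},
          indVec {1, 3, 5, 7}} : Set (Fin m → ZMod 2))) := by
  classical
  set t : Fin m → ZMod 2 × ZMod 2 × ZMod 2 := fun k => (v₁ k, v₂ k, v₃ k) with ht
  set N : ZMod 2 × ZMod 2 × ZMod 2 → ℕ :=
    fun s => (Finset.univ.filter fun k => t k = s).card with hN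
  -- cover
  have hcov' : ∀ k, t k ≠ (0, 0, 0) := by
    intro k hk
    obtain ⟨v, hv, hvk⟩ := hcov k
    have h0 : v₁ k = 0 ∧ v₂ k = 0 ∧ v₃ k = 0 := by
      have := hk
      rw [ht] at this
      exact ⟨congrArg (·.1) this, congrArg (·.2.1) this, congrArg (·.2.2) this⟩
    apply hvk
    have hle : Submodule.span (ZMod 2) ({v₁, v₂, v₃} : Set (Fin m → ZMod 2)) ≤
        LinearMap.ker (LinearMap.proj k (R := ZMod 2) (φ := fun _ : Fin m => ZMod 2)) := by
      rw [Submodule.span_le]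
      intro w hw
      simp only [Set.mem_insert_iff, Set.mem_singleton_iff] at hw
      rcases hw with rfl | rfl | rfl <;>
        simp [LinearMap.mem_ker, h0.1, h0.2.1, h0.2.2]
    exact hle hv
  -- card identities
  have e123 : (supp v₁ ∩ supp v₂ ∩ supp v₃).card = N (1,1,1) := by
    rw [show supp v₁ ∩ supp v₂ ∩ supp v₃ =
        Finset.univ.filter (fun k => (fun s : ZMod 2 × ZMod 2 × ZMod 2 =>
          s.1 ≠ 0 ∧ s.2.1 ≠ 0 ∧ s.2.2 ≠ 0) (t k)) from by
      ext k; simp [supp, ht, and_assoc]]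
    rw [keyLem t (fun s => s.1 ≠ 0 ∧ s.2.1 ≠ 0 ∧ s.2.2 ≠ 0),
      show Finset.univ.filter (fun s : ZMod 2 × ZMod 2 × ZMod 2 =>
        s.1 ≠ 0 ∧ s.2.1 ≠ 0 ∧ s.2.2 ≠ 0) = {(1,1,1)} from by decide,
      Finset.sum_singleton]
  have e12 : (supp v₁ ∩ supp v₂).card = N (1,1,0) + N (1,1,1) := by
    rw [show supp v₁ ∩ supp v₂ =
        Finset.univ.filter (fun k => (fun s : ZMod 2 × ZMod 2 × ZMod 2 =>
          s.1 ≠ 0 ∧ s.2.1 ≠ 0) (t k)) from by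
      ext k; simp [supp, ht]]
    rw [keyLem t (fun s => s.1 ≠ 0 ∧ s.2.1 ≠ 0),
      show Finset.univ.filter (fun s : ZMod 2 × ZMod 2 × ZMod 2 =>
        s.1 ≠ 0 ∧ s.2.1 ≠ 0) = {(1,1,0),(1,1,1)} from by decide]
    rw [Finset.sum_insert (by decide), Finset.sum_singleton]
  have e13 : (supp v₁ ∩ supp v₃).card = N (1,0,1) + N (1,1,1) := by
    rw [show supp v₁ ∩ supp v₃ =
        Finset.univ.filter (fun k => (fun s : ZMod 2 × ZMod 2 × ZMod 2 =>
          s.1 ≠ 0 ∧ s.2.2 ≠ 0) (t k)) from by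
      ext k; simp [supp, ht]]
    rw [keyLem t (fun s => s.1 ≠ 0 ∧ s.2.2 ≠ 0),
      show Finset.univ.filter (fun s : ZMod 2 × ZMod 2 × ZMod 2 =>
        s.1 ≠ 0 ∧ s.2.2 ≠ 0) = {(1,0,1),(1,1,1)} from by decide]
    rw [Finset.sum_insert (by decide), Finset.sum_singleton]
  have e23 : (supp v₂ ∩ supp v₃).card = N (0,1,1) + N (1,1,1) := by
    rw [show supp v₂ ∩ supp v₃ =
        Finset.univ.filter (fun k => (fun s : ZMod 2 × ZMod 2 × ZMod 2 =>
          s.2.1 ≠ 0 ∧ s.2.2 ≠ 0) (t k)) from by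
      ext k; simp [supp, ht]]
    rw [keyLem t (fun s => s.2.1 ≠ 0 ∧ s.2.2 ≠ 0),
      show Finset.univ.filter (fun s : ZMod 2 × ZMod 2 × ZMod 2 =>
        s.2.1 ≠ 0 ∧ s.2.2 ≠ 0) = {(0,1,1),(1,1,1)} from by decide]
    rw [Finset.sum_insert (by decide), Finset.sum_singleton]
  have e1 : (supp v₁).card = N (1,0,0) + N (1,0,1) + N (1,1,0) + N (1,1,1) := by
    rw [show supp v₁ =
        Finset.univ.filter (fun k => (fun s : ZMod 2 × ZMod 2 × ZMod 2 =>
          s.1 ≠ 0) (t k)) from by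
      ext k; simp [supp, ht]]
    rw [keyLem t (fun s => s.1 ≠ 0),
      show Finset.univ.filter (fun s : ZMod 2 × ZMod 2 × ZMod 2 =>
        s.1 ≠ 0) = {(1,0,0),(1,0,1),(1,1,0),(1,1,1)} from by decide]
    rw [Finset.sum_insert (by decide), Finset.sum_insert (by decide),
      Finset.sum_insert (by decide), Finset.sum_singleton]
    ring
  have e2 : (supp v₂).card = N (0,1,0) + N (0,1,1) + N (1,1,0) + N (1,1,1) := by
    rw [show supp v₂ =
        Finset.univ.filter (fun k => (fun s : ZMod 2 × ZMod 2 × ZMod 2 =>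
          s.2.1 ≠ 0) (t k)) from by
      ext k; simp [supp, ht]]
    rw [keyLem t (fun s => s.2.1 ≠ 0),
      show Finset.univ.filter (fun s : ZMod 2 × ZMod 2 × ZMod 2 =>
        s.2.1 ≠ 0) = {(0,1,0),(0,1,1),(1,1,0),(1,1,1)} from by decide]
    rw [Finset.sum_insert (by decide), Finset.sum_insert (by decide),
      Finset.sum_insert (by decide), Finset.sum_singleton]
    ring
  have e3 : (supp v₃).card = N (0,0,1) + N (0,1,1) + N (1,0,1) + N (1,1,1) := by
    rw [show supp v₃ =
        Finset.univ.filter (fun k => (fun s : ZMod 2 × ZMod 2 × ZMod 2 =>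
          s.2.2 ≠ 0) (t k)) from by
      ext k; simp [supp, ht]]
    rw [keyLem t (fun s => s.2.2 ≠ 0),
      show Finset.univ.filter (fun s : ZMod 2 × ZMod 2 × ZMod 2 =>
        s.2.2 ≠ 0) = {(0,0,1),(0,1,1),(1,0,1),(1,1,1)} from by decide]
    rw [Finset.sum_insert (by decide), Finset.sum_insert (by decide),
      Finset.sum_insert (by decide), Finset.sum_singleton]
    ring
  have em : m = N (0,0,1) + N (0,1,0) + N (0,1,1) + N (1,0,0) + N (1,0,1)
      + N (1,1,0) + N (1,1,1) := by
    have : m = (Finset.univ.filter (fun k => (fun s : ZMod 2 × ZMod 2 × ZMod 2 =>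
        s ≠ (0,0,0)) (t k))).card := by
      rw [show Finset.univ.filter (fun k => (fun s : ZMod 2 × ZMod 2 × ZMod 2 =>
          s ≠ (0,0,0)) (t k)) = Finset.univ from by
        ext k; simpa using hcov' k]
      simp
    rw [this, keyLem t (fun s => s ≠ (0,0,0)),
      show Finset.univ.filter (fun s : ZMod 2 × ZMod 2 × ZMod 2 => s ≠ (0,0,0)) =
        {(0,0,1),(0,1,0),(0,1,1),(1,0,0),(1,0,1),(1,1,0),(1,1,1)} from by decide]
    rw [Finset.sum_insert (by decide), Finset.sum_insert (by decide),
      Finset.sum_insert (by decide), Finset.sum_insert (by decide),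
      Finset.sum_insert (by decide), Finset.sum_insert (by decide),
      Finset.sum_singleton]
    ring
  rw [e123] at h123
  rw [e12] at h12
  rw [e13] at h13
  rw [e23] at h23
  rw [e1] at h1
  rw [e2] at h2
  rw [e3] at h3
  obtain ⟨c, hc⟩ := h123
  refine ⟨by omega, ?_⟩
  intro hm
  subst hm
  have hne : ∀ i : Fin 7, (Finset.univ.filter fun k => t k = sigVec i).Nonempty := by
    intro i
    rw [← Finset.card_pos]
    fin_cases i
    · show 0 < N (1,1,1); omega
    · show 0 < N (1,1,0); omega
    · show 0 < N (1,0,1); omega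
    · show 0 < N (1,0,0); omega
    · show 0 < N (0,1,1); omega
    · show 0 < N (0,1,0); omega
    · show 0 < N (0,0,1); omega
  set g : Fin 7 → Fin 7 := fun i => (hne i).choose with hgdef
  have hg : ∀ i, t (g i) = sigVec i := by
    intro i
    have := (hne i).choose_spec
    rw [Finset.mem_filter] at this
    exact this.2
  have ginj : Function.Injective g := by
    intro i j hij
    exact sigInj (show sigVec i = sigVec j by rw [← hg i, ← hg j, hij])
  refine ⟨Equiv.ofBijective g ((Fintype.bijective_iff_injective_and_card g).mpr
    ⟨ginj, rfl⟩), ?_⟩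
  have hw1 : permMap (Equiv.ofBijective g ((Fintype.bijective_iff_injective_and_card g).mpr
      ⟨ginj, rfl⟩)) v₁ = indVec {1,2,3,4} := by
    funext k
    show v₁ (g k) = _
    have h := hg k
    have hv : v₁ (g k) = (sigVec k).1 := congrArg (·.1) h
    rw [hv]
    clear hv h
    revert k
    decide
  have hw2 : permMap (Equiv.ofBijective g ((Fintype.bijective_iff_injective_and_card g).mpr
      ⟨ginj, rfl⟩)) v₂ = indVec {1,2,5,6} := by
    funext k
    show v₂ (g k) = _
    have h := hg k
    have hv : v₂ (g k) = (sigVec k).2.1 := congrArg (·.2.1) h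
    rw [hv]
    clear hv h
    revert k
    decide
  have hw3 : permMap (Equiv.ofBijective g ((Fintype.bijective_iff_injective_and_card g).mpr
      ⟨ginj, rfl⟩)) v₃ = indVec {1,3,5,7} := by
    funext k
    show v₃ (g k) = _
    have h := hg k
    have hv : v₃ (g k) = (sigVec k).2.2 := congrArg (·.2.2) h
    rw [hv]
    clear hv h
    revert k
    decide
  rw [Submodule.map_span]
  congr 1
  rw [Set.image_insert_eq, Set.image_insert_eq, Set.image_singleton, hw1, hw2, hw3]
end

section
/- Let m : ℕ and let V ⊆ (Fin m → ZMod 2) be a doubly even code spanned by linearly independent vectors v₁, v₂, v₃ such that: |v_i| ≡ 0 (mod 8) for i = 1,2,3; |supp v_i ∩ supp v_j| ≡ 0 (mod 4) for 1 ≤ i < j ≤ 3; |supp v₁ ∩ supp v₂ ∩ supp v₃| is odd; and every coordinate k ∈ Fin m lies in the support of some element of V. Then m ≥ 13, and if m = 13 then some permutation of the 13 coordinates maps V onto the code spanned by the indicator vectors of {1,...,8}, {1,2,3,4,9,10,11,12} and {1,5,6,7,9,10,11,13}. -/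
set_option maxHeartbeats 2000000
set_option linter.all false


/-- If two functions into a type have fibers of the same cardinalities, they
differ by a permutation of the domain. -/
lemma exists_perm_comp {α β : Type*} [Fintype α] [DecidableEq β]
    (g₁ g₂ : α → β)
    (h : ∀ b, Fintype.card {a // g₁ a = b} = Fintype.card {a // g₂ a = b}) :
    ∃ π : Equiv.Perm α, g₁ ∘ π = g₂ := by
  classical
  have e : ∀ b, {a // g₂ a = b} ≃ {a // g₁ a = b} :=
    fun b => Fintype.equivOfCardEq (h b).symm
  refine ⟨(Equiv.sigmaFiberEquiv g₂).symm.trans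
    ((Equiv.sigmaCongrRight e).trans (Equiv.sigmaFiberEquiv g₁)), ?_⟩
  funext a
  exact (e (g₂ a) ⟨a, rfl⟩).2

/-- Theorem 4.4, case of `C₂³` (characteristic vector `(000000)`): a doubly even
code realizing `C₂³` has degree at least 13, and in degree 13 it is, up to a
permutation of coordinates, the basic representation given in the paper. -/
theorem stmt13 (m : ℕ) (v₁ v₂ v₃ : Fin m → ZMod 2)
    (hli : LinearIndependent (ZMod 2) ![v₁, v₂, v₃])
    (hde4 : ∀ v ∈ Submodule.span (ZMod 2) ({v₁, v₂, v₃} : Set (Fin m → ZMod 2)),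
      (supp v).card % 4 = 0)
    (hde2 : ∀ u ∈ Submodule.span (ZMod 2) ({v₁, v₂, v₃} : Set (Fin m → ZMod 2)),
      ∀ v ∈ Submodule.span (ZMod 2) ({v₁, v₂, v₃} : Set (Fin m → ZMod 2)),
      (supp u ∩ supp v).card % 2 = 0)
    (h1 : (supp v₁).card % 8 = 0) (h2 : (supp v₂).card % 8 = 0)
    (h3 : (supp v₃).card % 8 = 0)
    (h12 : (supp v₁ ∩ supp v₂).card % 4 = 0)
    (h13 : (supp v₁ ∩ supp v₃).card % 4 = 0)
    (h23 : (supp v₂ ∩ supp v₃).card % 4 = 0)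
    (h123 : Odd (supp v₁ ∩ supp v₂ ∩ supp v₃).card)
    (hcov : ∀ k : Fin m, ∃ v ∈ Submodule.span (ZMod 2)
      ({v₁, v₂, v₃} : Set (Fin m → ZMod 2)), v k ≠ 0) :
    13 ≤ m ∧ (m = 13 → ∃ π : Equiv.Perm (Fin m),
      Submodule.map (permMap π)
          (Submodule.span (ZMod 2) ({v₁, v₂, v₃} : Set (Fin m → ZMod 2))) =
        Submodule.span (ZMod 2) ({indVec {1, 2, 3, 4, 5, 6, 7, 8}, indVec {1, 2, 3, 4, 9, 10, 11, 12},
          indVec {1, 5, 6, 7, 9, 10, 11, 13}} : Set (Fin m → ZMod 2))) := by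
  classical
  -- every coordinate is in the union of the three supports
  have hcov' : ∀ k : Fin m, v₁ k ≠ 0 ∨ v₂ k ≠ 0 ∨ v₃ k ≠ 0 := by
    intro k
    by_contra hcon
    push_neg at hcon
    obtain ⟨hk1, hk2, hk3⟩ := hcon
    have hv0 : ∀ v ∈ Submodule.span (ZMod 2) ({v₁, v₂, v₃} : Set (Fin m → ZMod 2)),
        v k = 0 := by
      intro v hv
      induction hv using Submodule.span_induction with
      | mem x hx => rcases hx with rfl | rfl | rfl <;> assumption
      | zero => rfl
      | add x y hx hy ihx ihy => simp [Pi.add_apply, ihx, ihy]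
      | smul a x hx ih => simp [Pi.smul_apply, ih]
    obtain ⟨v, hv, hvk⟩ := hcov k
    exact hvk (hv0 v hv)
  set A := supp v₁ with hA
  set B := supp v₂ with hB
  set C := supp v₃ with hC
  have huniv : (Finset.univ : Finset (Fin m)) = A ∪ (B ∪ C) := by
    ext k
    simp only [Finset.mem_univ, true_iff, Finset.mem_union, hA, hB, hC, supp,
      Finset.mem_filter, Finset.mem_univ, true_and]
    rcases hcov' k with h | h | h <;> tauto
  have f1 : m = (A ∪ (B ∪ C)).card := by
    rw [← huniv, Finset.card_univ, Fintype.card_fin]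
  have f2 := Finset.card_union_add_card_inter A (B ∪ C)
  have f4 := Finset.card_union_add_card_inter B C
  have hAd : A ∩ (B ∪ C) = (A ∩ B) ∪ (A ∩ C) := by
    ext k; simp only [Finset.mem_inter, Finset.mem_union]; tauto
  have hBd : B ∩ (A ∪ C) = (A ∩ B) ∪ (B ∩ C) := by
    ext k; simp only [Finset.mem_inter, Finset.mem_union]; tauto
  have hCd : C ∩ (A ∪ B) = (A ∩ C) ∪ (B ∩ C) := by
    ext k; simp only [Finset.mem_inter, Finset.mem_union]; tauto
  have hAi : (A ∩ B) ∩ (A ∩ C) = A ∩ B ∩ C := by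
    ext k; simp only [Finset.mem_inter]; tauto
  have hBi : (A ∩ B) ∩ (B ∩ C) = A ∩ B ∩ C := by
    ext k; simp only [Finset.mem_inter]; tauto
  have hCi : (A ∩ C) ∩ (B ∩ C) = A ∩ B ∩ C := by
    ext k; simp only [Finset.mem_inter]; tauto
  rw [hAd] at f2
  have f3 := Finset.card_union_add_card_inter (A ∩ B) (A ∩ C)
  rw [hAi] at f3
  have e12 := Finset.card_inter_add_card_sdiff (A ∩ B) C
  have e13 := Finset.card_inter_add_card_sdiff (A ∩ C) B
  rw [Finset.inter_right_comm] at e13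
  have e23 := Finset.card_inter_add_card_sdiff (B ∩ C) A
  have h23i : B ∩ C ∩ A = A ∩ B ∩ C := by
    ext k; simp only [Finset.mem_inter]; tauto
  rw [h23i] at e23
  have eA := Finset.card_sdiff_add_card_inter A (B ∪ C)
  rw [hAd] at eA
  have eB := Finset.card_sdiff_add_card_inter B (A ∪ C)
  rw [hBd] at eB
  have gB := Finset.card_union_add_card_inter (A ∩ B) (B ∩ C)
  rw [hBi] at gB
  have eC := Finset.card_sdiff_add_card_inter C (A ∪ B)
  rw [hCd] at eC
  have gC := Finset.card_union_add_card_inter (A ∩ C) (B ∩ C)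
  rw [hCi] at gC
  obtain ⟨j, hj⟩ := h123
  refine ⟨by omega, fun hm => ?_⟩
  subst hm
  -- exact sizes of the seven regions
  have ht : (A ∩ B ∩ C).card = 1 := by omega
  have hp : ((A ∩ B) \ C).card = 3 := by omega
  have hq : ((A ∩ C) \ B).card = 3 := by omega
  have hr : ((B ∩ C) \ A).card = 3 := by omega
  have hxx : (A \ (B ∪ C)).card = 1 := by omega
  have hyy : (B \ (A ∪ C)).card = 1 := by omega
  have hzz : (C \ (A ∪ B)).card = 1 := by omega
  have hone : ∀ x : ZMod 2, x ≠ 0 ↔ x = 1 := by decide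
  have hfib : ∀ b : ZMod 2 × ZMod 2 × ZMod 2,
      Fintype.card {a : Fin 13 // (v₁ a, v₂ a, v₃ a) = b} =
      Fintype.card {a : Fin 13 //
        ((indVec {1, 2, 3, 4, 5, 6, 7, 8} : Fin 13 → ZMod 2) a,
         (indVec {1, 2, 3, 4, 9, 10, 11, 12} : Fin 13 → ZMod 2) a,
         (indVec {1, 5, 6, 7, 9, 10, 11, 13} : Fin 13 → ZMod 2) a) = b} := by
    have two : ∀ u : ZMod 2, u = 0 ∨ u = 1 := by decide
    rintro ⟨x, y, z⟩
    rcases two x with rfl | rfl <;> rcases two y with rfl | rfl <;>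
      rcases two z with rfl | rfl
    · -- (0,0,0) : empty
      have hcongr : ∀ k : Fin 13,
          (v₁ k, v₂ k, v₃ k) = ((0 : ZMod 2), (0 : ZMod 2), (0 : ZMod 2)) ↔
          k ∈ (∅ : Finset (Fin 13)) := by
        intro k
        simp only [Prod.mk.injEq, Finset.notMem_empty, iff_false, not_and]
        rcases hcov' k with h | h | h <;> tauto
      rw [Fintype.card_congr (Equiv.subtypeEquivRight hcongr), Fintype.card_coe,
        Finset.card_empty]
      decide
    · -- (0,0,1)
      have hcongr : ∀ k : Fin 13,
          (v₁ k, v₂ k, v₃ k) = ((0 : ZMod 2), (0 : ZMod 2), (1 : ZMod 2)) ↔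
          k ∈ C \ (A ∪ B) := by
        intro k
        simp only [Prod.mk.injEq, Finset.mem_sdiff, Finset.mem_union, hA, hB, hC, supp,
          Finset.mem_filter, Finset.mem_univ, true_and]
        have t1 := hone (v₁ k); have t2 := hone (v₂ k); have t3 := hone (v₃ k); tauto
      rw [Fintype.card_congr (Equiv.subtypeEquivRight hcongr), Fintype.card_coe, hzz]
      decide
    · -- (0,1,0)
      have hcongr : ∀ k : Fin 13,
          (v₁ k, v₂ k, v₃ k) = ((0 : ZMod 2), (1 : ZMod 2), (0 : ZMod 2)) ↔
          k ∈ B \ (A ∪ C) := by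
        intro k
        simp only [Prod.mk.injEq, Finset.mem_sdiff, Finset.mem_union, hA, hB, hC, supp,
          Finset.mem_filter, Finset.mem_univ, true_and]
        have t1 := hone (v₁ k); have t2 := hone (v₂ k); have t3 := hone (v₃ k); tauto
      rw [Fintype.card_congr (Equiv.subtypeEquivRight hcongr), Fintype.card_coe, hyy]
      decide
    · -- (0,1,1)
      have hcongr : ∀ k : Fin 13,
          (v₁ k, v₂ k, v₃ k) = ((0 : ZMod 2), (1 : ZMod 2), (1 : ZMod 2)) ↔
          k ∈ (B ∩ C) \ A := by
        intro k
        simp only [Prod.mk.injEq, Finset.mem_sdiff, Finset.mem_inter, hA, hB, hC, supp,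
          Finset.mem_filter, Finset.mem_univ, true_and]
        have t1 := hone (v₁ k); have t2 := hone (v₂ k); have t3 := hone (v₃ k); tauto
      rw [Fintype.card_congr (Equiv.subtypeEquivRight hcongr), Fintype.card_coe, hr]
      decide
    · -- (1,0,0)
      have hcongr : ∀ k : Fin 13,
          (v₁ k, v₂ k, v₃ k) = ((1 : ZMod 2), (0 : ZMod 2), (0 : ZMod 2)) ↔
          k ∈ A \ (B ∪ C) := by
        intro k
        simp only [Prod.mk.injEq, Finset.mem_sdiff, Finset.mem_union, hA, hB, hC, supp,
          Finset.mem_filter, Finset.mem_univ, true_and]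
        have t1 := hone (v₁ k); have t2 := hone (v₂ k); have t3 := hone (v₃ k); tauto
      rw [Fintype.card_congr (Equiv.subtypeEquivRight hcongr), Fintype.card_coe, hxx]
      decide
    · -- (1,0,1)
      have hcongr : ∀ k : Fin 13,
          (v₁ k, v₂ k, v₃ k) = ((1 : ZMod 2), (0 : ZMod 2), (1 : ZMod 2)) ↔
          k ∈ (A ∩ C) \ B := by
        intro k
        simp only [Prod.mk.injEq, Finset.mem_sdiff, Finset.mem_inter, hA, hB, hC, supp,
          Finset.mem_filter, Finset.mem_univ, true_and]
        have t1 := hone (v₁ k); have t2 := hone (v₂ k); have t3 := hone (v₃ k); tauto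
      rw [Fintype.card_congr (Equiv.subtypeEquivRight hcongr), Fintype.card_coe, hq]
      decide
    · -- (1,1,0)
      have hcongr : ∀ k : Fin 13,
          (v₁ k, v₂ k, v₃ k) = ((1 : ZMod 2), (1 : ZMod 2), (0 : ZMod 2)) ↔
          k ∈ (A ∩ B) \ C := by
        intro k
        simp only [Prod.mk.injEq, Finset.mem_sdiff, Finset.mem_inter, hA, hB, hC, supp,
          Finset.mem_filter, Finset.mem_univ, true_and]
        have t1 := hone (v₁ k); have t2 := hone (v₂ k); have t3 := hone (v₃ k); tauto
      rw [Fintype.card_congr (Equiv.subtypeEquivRight hcongr), Fintype.card_coe, hp]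
      decide
    · -- (1,1,1)
      have hcongr : ∀ k : Fin 13,
          (v₁ k, v₂ k, v₃ k) = ((1 : ZMod 2), (1 : ZMod 2), (1 : ZMod 2)) ↔
          k ∈ A ∩ B ∩ C := by
        intro k
        simp only [Prod.mk.injEq, Finset.mem_inter, hA, hB, hC, supp,
          Finset.mem_filter, Finset.mem_univ, true_and]
        have t1 := hone (v₁ k); have t2 := hone (v₂ k); have t3 := hone (v₃ k); tauto
      rw [Fintype.card_congr (Equiv.subtypeEquivRight hcongr), Fintype.card_coe, ht]
      decide
  obtain ⟨π, hπ⟩ := exists_perm_comp (fun k : Fin 13 => (v₁ k, v₂ k, v₃ k))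
    (fun k : Fin 13 =>
      ((indVec {1, 2, 3, 4, 5, 6, 7, 8} : Fin 13 → ZMod 2) k,
       (indVec {1, 2, 3, 4, 9, 10, 11, 12} : Fin 13 → ZMod 2) k,
       (indVec {1, 5, 6, 7, 9, 10, 11, 13} : Fin 13 → ZMod 2) k)) hfib
  have e1 : permMap π v₁ = (indVec {1, 2, 3, 4, 5, 6, 7, 8} : Fin 13 → ZMod 2) :=
    funext fun k => congrArg Prod.fst (congrFun hπ k)
  have e2 : permMap π v₂ = (indVec {1, 2, 3, 4, 9, 10, 11, 12} : Fin 13 → ZMod 2) :=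
    funext fun k => congrArg (fun p => p.2.1) (congrFun hπ k)
  have e3 : permMap π v₃ = (indVec {1, 5, 6, 7, 9, 10, 11, 13} : Fin 13 → ZMod 2) :=
    funext fun k => congrArg (fun p => p.2.2) (congrFun hπ k)
  refine ⟨π, ?_⟩
  rw [Submodule.map_span, Set.image_insert_eq, Set.image_insert_eq,
    Set.image_singleton, e1, e2, e3]
end

section
/- Let m : ℕ and let V ⊆ (Fin m → ZMod 2) be a doubly even code spanned by linearly independent vectors v₁, v₂, v₃ such that: |v_i| ≡ 0 (mod 8) for i = 1,2,3; |supp v_i ∩ supp v_j| ≡ 2 (mod 4) for 1 ≤ i < j ≤ 3; |supp v₁ ∩ supp v₂ ∩ supp v₃| is odd; and every coordinate k ∈ Fin m lies in the support of some element of V. Then m ≥ 11, and if m = 11 then some permutation of the 11 coordinates maps V onto the code spanned by the indicator vectors of {1,...,8}, {1,2,3,4,5,6,9,10} and {1,2,3,4,5,7,9,11}. -/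
open Finset

lemma ZMod.sum_univ_two {M : Type*} [AddCommMonoid M] (f : ZMod 2 → M) :
    ∑ x, f x = f 0 + f 1 :=
  Fin.sum_univ_two f

lemma exists_perm_comp_eq_of_card_fiber_eq {α β : Type*} [Fintype α] [DecidableEq β] {f g : α → β} (h : ∀ b, #{a | f a = b} = #{a | g a = b}) :
    ∃ π : Equiv.Perm α, f ∘ π = g :=
  let e b : {a // g a = b} ≃ {a // f a = b} :=
    Fintype.equivOfCardEq (by simp only [Fintype.card_subtype, h])
  ⟨Equiv.ofFiberEquiv e, funext (Equiv.ofFiberEquiv_map e)⟩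

lemma apply_eq_zero_of_mem_span {ι R : Type*} [Semiring R] {s : Set (ι → R)} {k : ι}
    (hs : ∀ v ∈ s, v k = 0) {v : ι → R} (hv : v ∈ Submodule.span R s) : v k = 0 :=
  (Submodule.span_le (p := LinearMap.ker (LinearMap.proj k)).mpr hs) hv

def basicTypeCount (t : ZMod 2 × ZMod 2 × ZMod 2) : ℕ :=
  if t = 0 then 0 else if t = (1, 1, 1) then 5 else 1

lemma eleven_le_sum_and_eq_basicTypeCount (N : ZMod 2 × ZMod 2 × ZMod 2 → ℕ) (h0 : N 0 = 0)
    (h1 : (N (1,0,0) + N (1,0,1) + N (1,1,0) + N (1,1,1)) % 8 = 0)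
    (h2 : (N (0,1,0) + N (0,1,1) + N (1,1,0) + N (1,1,1)) % 8 = 0)
    (h3 : (N (0,0,1) + N (0,1,1) + N (1,0,1) + N (1,1,1)) % 8 = 0)
    (h12 : (N (1,1,0) + N (1,1,1)) % 4 = 2) (h13 : (N (1,0,1) + N (1,1,1)) % 4 = 2)
    (h23 : (N (0,1,1) + N (1,1,1)) % 4 = 2) (h123 : Odd (N (1,1,1))) :
    11 ≤ ∑ t, N t ∧ (∑ t, N t = 11 → N = basicTypeCount) := by
  simp only [Fintype.sum_prod_type, ZMod.sum_univ_two]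
  obtain ⟨j, hj⟩ := h123
  change N (0, 0, 0) = 0 at h0
  refine ⟨by omega, fun h => funext fun ⟨a, b, c⟩ => ?_⟩
  fin_cases a <;> fin_cases b <;> fin_cases c <;> simp +decide [basicTypeCount] <;> omega

section TypeCount

variable {m : ℕ} (v₁ v₂ v₃ : Fin m → ZMod 2)

def coordType (k : Fin m) : ZMod 2 × ZMod 2 × ZMod 2 := (v₁ k, v₂ k, v₃ k)

def typeCount (t : ZMod 2 × ZMod 2 × ZMod 2) : ℕ := #{k | coordType v₁ v₂ v₃ k = t}

local notation "N" => typeCount v₁ v₂ v₃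

lemma card_filter_coordType (p : ZMod 2 × ZMod 2 × ZMod 2 → Prop) [DecidablePred p] :
    #{k | p (coordType v₁ v₂ v₃ k)} = ∑ t with p t, N t := by
  simp only [typeCount, sum_card_fiberwise_eq_card_filter, mem_filter, mem_univ, true_and]

lemma sum_typeCount : ∑ t, N t = m := by
  simpa using (card_filter_coordType v₁ v₂ v₃ fun _ => True).symm

lemma typeCount_zero
    (hcov : ∀ k, ∃ v ∈ Submodule.span (ZMod 2) {v₁, v₂, v₃}, v k ≠ 0) : N 0 = 0 := by
  refine card_eq_zero.mpr (filter_eq_empty_iff.mpr fun k _ hk => ?_)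
  obtain ⟨v, hv, hvk⟩ := hcov k
  simp only [coordType, Prod.ext_iff] at hk
  exact hvk (apply_eq_zero_of_mem_span (by simp [hk.1, hk.2.1, hk.2.2]) hv)

lemma card_supp₁ : #(supp v₁) = N (1,0,0) + N (1,0,1) + N (1,1,0) + N (1,1,1) := by
  refine (card_filter_coordType v₁ v₂ v₃ (·.1 ≠ 0)).trans ?_
  simp [sum_filter, Fintype.sum_prod_type, ZMod.sum_univ_two, add_assoc]

lemma card_supp₂ : #(supp v₂) = N (0,1,0) + N (0,1,1) + N (1,1,0) + N (1,1,1) := by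
  refine (card_filter_coordType v₁ v₂ v₃ (·.2.1 ≠ 0)).trans ?_
  simp [sum_filter, Fintype.sum_prod_type, ZMod.sum_univ_two, add_assoc]

lemma card_supp₃ : #(supp v₃) = N (0,0,1) + N (0,1,1) + N (1,0,1) + N (1,1,1) := by
  refine (card_filter_coordType v₁ v₂ v₃ (·.2.2 ≠ 0)).trans ?_
  simp [sum_filter, Fintype.sum_prod_type, ZMod.sum_univ_two, add_assoc]

lemma card_supp₁₂ : #(supp v₁ ∩ supp v₂) = N (1,1,0) + N (1,1,1) := by
  rw [supp, supp, ← filter_and]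
  refine (card_filter_coordType v₁ v₂ v₃ fun t => t.1 ≠ 0 ∧ t.2.1 ≠ 0).trans ?_
  simp [sum_filter, Fintype.sum_prod_type, ZMod.sum_univ_two]

lemma card_supp₁₃ : #(supp v₁ ∩ supp v₃) = N (1,0,1) + N (1,1,1) := by
  rw [supp, supp, ← filter_and]
  refine (card_filter_coordType v₁ v₂ v₃ fun t => t.1 ≠ 0 ∧ t.2.2 ≠ 0).trans ?_
  simp [sum_filter, Fintype.sum_prod_type, ZMod.sum_univ_two]

lemma card_supp₂₃ : #(supp v₂ ∩ supp v₃) = N (0,1,1) + N (1,1,1) := by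
  rw [supp, supp, ← filter_and]
  refine (card_filter_coordType v₁ v₂ v₃ fun t => t.2.1 ≠ 0 ∧ t.2.2 ≠ 0).trans ?_
  simp [sum_filter, Fintype.sum_prod_type, ZMod.sum_univ_two]

lemma card_supp₁₂₃ : #(supp v₁ ∩ supp v₂ ∩ supp v₃) = N (1,1,1) := by
  rw [supp, supp, supp, ← filter_and, ← filter_and]
  refine (card_filter_coordType v₁ v₂ v₃ fun t => (t.1 ≠ 0 ∧ t.2.1 ≠ 0) ∧ t.2.2 ≠ 0).trans ?_
  simp [sum_filter, Fintype.sum_prod_type, ZMod.sum_univ_two]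

lemma map_permMap_span_eq_of_coordType_comp {π : Equiv.Perm (Fin m)} {w₁ w₂ w₃ : Fin m → ZMod 2}
    (h : coordType v₁ v₂ v₃ ∘ π = coordType w₁ w₂ w₃) :
    Submodule.map (permMap π) (Submodule.span (ZMod 2) {v₁, v₂, v₃}) =
      Submodule.span (ZMod 2) {w₁, w₂, w₃} := by
  simp only [coordType, funext_iff, Function.comp_apply, Prod.ext_iff] at h
  rw [Submodule.map_span, Set.image_insert_eq, Set.image_insert_eq, Set.image_singleton]
  congr
  exacts [funext fun k => (h k).1, funext fun k => (h k).2.1, funext fun k => (h k).2.2]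

end TypeCount

lemma typeCount_basic :
    typeCount (m := 11) (indVec {1, 2, 3, 4, 5, 6, 7, 8}) (indVec {1, 2, 3, 4, 5, 6, 9, 10})
      (indVec {1, 2, 3, 4, 5, 7, 9, 11}) = basicTypeCount := by
  decide

theorem stmt14_general (m : ℕ) (v₁ v₂ v₃ : Fin m → ZMod 2)
    (h1 : (supp v₁).card % 8 = 0) (h2 : (supp v₂).card % 8 = 0)
    (h3 : (supp v₃).card % 8 = 0)
    (h12 : (supp v₁ ∩ supp v₂).card % 4 = 2)
    (h13 : (supp v₁ ∩ supp v₃).card % 4 = 2)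
    (h23 : (supp v₂ ∩ supp v₃).card % 4 = 2)
    (h123 : Odd (supp v₁ ∩ supp v₂ ∩ supp v₃).card)
    (hcov : ∀ k : Fin m, ∃ v ∈ Submodule.span (ZMod 2)
      ({v₁, v₂, v₃} : Set (Fin m → ZMod 2)), v k ≠ 0) :
    11 ≤ m ∧ (m = 11 → ∃ π : Equiv.Perm (Fin m),
      Submodule.map (permMap π)
          (Submodule.span (ZMod 2) ({v₁, v₂, v₃} : Set (Fin m → ZMod 2))) =
        Submodule.span (ZMod 2) ({indVec {1, 2, 3, 4, 5, 6, 7, 8}, indVec {1, 2, 3, 4, 5, 6, 9, 10},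
          indVec {1, 2, 3, 4, 5, 7, 9, 11}} : Set (Fin m → ZMod 2))) := by
  obtain ⟨h11, hbasic⟩ := eleven_le_sum_and_eq_basicTypeCount _ (typeCount_zero v₁ v₂ v₃ hcov)
    (card_supp₁ v₁ v₂ v₃ ▸ h1) (card_supp₂ v₁ v₂ v₃ ▸ h2) (card_supp₃ v₁ v₂ v₃ ▸ h3)
    (card_supp₁₂ v₁ v₂ v₃ ▸ h12) (card_supp₁₃ v₁ v₂ v₃ ▸ h13) (card_supp₂₃ v₁ v₂ v₃ ▸ h23)
    (card_supp₁₂₃ v₁ v₂ v₃ ▸ h123)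
  rw [sum_typeCount] at h11 hbasic
  refine ⟨h11, fun hm => ?_⟩
  subst hm
  obtain ⟨π, hπ⟩ := exists_perm_comp_eq_of_card_fiber_eq
    (congrFun ((hbasic rfl).trans typeCount_basic.symm))
  exact ⟨π, map_permMap_span_eq_of_coordType_comp v₁ v₂ v₃ hπ⟩

/-- Theorem 4.4, case of `C₃³` (characteristic vector `(000111)`): a doubly even
code realizing `C₃³` has degree at least 11, and in degree 11 it is, up to a
permutation of coordinates, the basic representation given in the paper. -/
theorem stmt14 (m : ℕ) (v₁ v₂ v₃ : Fin m → ZMod 2)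
    (hli : LinearIndependent (ZMod 2) ![v₁, v₂, v₃])
    (hde4 : ∀ v ∈ Submodule.span (ZMod 2) ({v₁, v₂, v₃} : Set (Fin m → ZMod 2)),
      (supp v).card % 4 = 0)
    (hde2 : ∀ u ∈ Submodule.span (ZMod 2) ({v₁, v₂, v₃} : Set (Fin m → ZMod 2)),
      ∀ v ∈ Submodule.span (ZMod 2) ({v₁, v₂, v₃} : Set (Fin m → ZMod 2)),
      (supp u ∩ supp v).card % 2 = 0)
    (h1 : (supp v₁).card % 8 = 0) (h2 : (supp v₂).card % 8 = 0)
    (h3 : (supp v₃).card % 8 = 0)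
    (h12 : (supp v₁ ∩ supp v₂).card % 4 = 2)
    (h13 : (supp v₁ ∩ supp v₃).card % 4 = 2)
    (h23 : (supp v₂ ∩ supp v₃).card % 4 = 2)
    (h123 : Odd (supp v₁ ∩ supp v₂ ∩ supp v₃).card)
    (hcov : ∀ k : Fin m, ∃ v ∈ Submodule.span (ZMod 2)
      ({v₁, v₂, v₃} : Set (Fin m → ZMod 2)), v k ≠ 0) :
    11 ≤ m ∧ (m = 11 → ∃ π : Equiv.Perm (Fin m),
      Submodule.map (permMap π)
          (Submodule.span (ZMod 2) ({v₁, v₂, v₃} : Set (Fin m → ZMod 2))) =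
        Submodule.span (ZMod 2) ({indVec {1, 2, 3, 4, 5, 6, 7, 8}, indVec {1, 2, 3, 4, 5, 6, 9, 10},
          indVec {1, 2, 3, 4, 5, 7, 9, 11}} : Set (Fin m → ZMod 2))) :=
  stmt14_general m v₁ v₂ v₃ h1 h2 h3 h12 h13 h23 h123 hcov
end

section
/- Let m : ℕ and let V ⊆ (Fin m → ZMod 2) be a doubly even code spanned by linearly independent vectors v₁, v₂, v₃ such that: |v_i| ≡ 4 (mod 8) for i = 1,2,3; |supp v₁ ∩ supp v₂| ≡ 2 (mod 4), |supp v₁ ∩ supp v₃| ≡ 2 (mod 4), |supp v₂ ∩ supp v₃| ≡ 0 (mod 4); |supp v₁ ∩ supp v₂ ∩ supp v₃| is odd; and every coordinate k ∈ Fin m lies in the support of some element of V. Then m ≥ 17, and if m = 17 then some permutation of the 17 coordinates maps V onto the code spanned by the indicator vectors of {1,2,3,4}, {1,2,5,6,7,8,9,10,11,12,13,14} and {1,3,5,6,7,8,9,10,11,15,16,17}. -/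
lemma zmod2_cases (x : ZMod 2) : x = 0 ∨ x = 1 := by revert x; decide

/-- If two functions on a finite type have fibers of equal cardinality over every
point, then one is a coordinate permutation of the other. -/
lemma exists_perm_of_fiber_card_eq {α β : Type*} [Fintype α] [DecidableEq β]
    (f g : α → β)
    (h : ∀ b, (Finset.univ.filter fun a => f a = b).card =
              (Finset.univ.filter fun a => g a = b).card) :
    ∃ π : Equiv.Perm α, ∀ a, f (π a) = g a := by
  have h' : ∀ b, Fintype.card {a // g a = b} = Fintype.card {a // f a = b} := by
    intro b
    simp only [Fintype.card_subtype]
    exact (h b).symm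
  let e : ∀ b, {a // g a = b} ≃ {a // f a = b} := fun b => Fintype.equivOfCardEq (h' b)
  refine ⟨(Equiv.sigmaFiberEquiv g).symm.trans
    ((Equiv.sigmaCongrRight e).trans (Equiv.sigmaFiberEquiv f)), fun a => ?_⟩
  exact (e (g a) ⟨a, rfl⟩).2

set_option maxHeartbeats 2000000 in
/-- Theorem 4.4, case of `C₄³` (characteristic vector `(111110)`): a doubly even
code realizing `C₄³` has degree at least 17, and in degree 17 it is, up to a
permutation of coordinates, the basic representation given in the paper. -/
theorem stmt15 (m : ℕ) (v₁ v₂ v₃ : Fin m → ZMod 2)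
    (hli : LinearIndependent (ZMod 2) ![v₁, v₂, v₃])
    (hde4 : ∀ v ∈ Submodule.span (ZMod 2) ({v₁, v₂, v₃} : Set (Fin m → ZMod 2)),
      (supp v).card % 4 = 0)
    (hde2 : ∀ u ∈ Submodule.span (ZMod 2) ({v₁, v₂, v₃} : Set (Fin m → ZMod 2)),
      ∀ v ∈ Submodule.span (ZMod 2) ({v₁, v₂, v₃} : Set (Fin m → ZMod 2)),
      (supp u ∩ supp v).card % 2 = 0)
    (h1 : (supp v₁).card % 8 = 4) (h2 : (supp v₂).card % 8 = 4)
    (h3 : (supp v₃).card % 8 = 4)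
    (h12 : (supp v₁ ∩ supp v₂).card % 4 = 2)
    (h13 : (supp v₁ ∩ supp v₃).card % 4 = 2)
    (h23 : (supp v₂ ∩ supp v₃).card % 4 = 0)
    (h123 : Odd (supp v₁ ∩ supp v₂ ∩ supp v₃).card)
    (hcov : ∀ k : Fin m, ∃ v ∈ Submodule.span (ZMod 2)
      ({v₁, v₂, v₃} : Set (Fin m → ZMod 2)), v k ≠ 0) :
    17 ≤ m ∧ (m = 17 → ∃ π : Equiv.Perm (Fin m),
      Submodule.map (permMap π)
          (Submodule.span (ZMod 2) ({v₁, v₂, v₃} : Set (Fin m → ZMod 2))) =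
        Submodule.span (ZMod 2) ({indVec {1, 2, 3, 4}, indVec {1, 2, 5, 6, 7, 8, 9, 10, 11, 12, 13, 14},
          indVec {1, 3, 5, 6, 7, 8, 9, 10, 11, 15, 16, 17}} : Set (Fin m → ZMod 2))) := by
  rw [Nat.odd_iff] at h123
  have e1 : (supp v₁).card =
      (Finset.univ.filter fun k => (v₁ k, v₂ k, v₃ k) = (1,0,0)).card +
      (Finset.univ.filter fun k => (v₁ k, v₂ k, v₃ k) = (1,1,0)).card +
      (Finset.univ.filter fun k => (v₁ k, v₂ k, v₃ k) = (1,0,1)).card +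
      (Finset.univ.filter fun k => (v₁ k, v₂ k, v₃ k) = (1,1,1)).card := by
    simp only [supp, Finset.card_filter, ← Finset.sum_add_distrib]
    refine Finset.sum_congr rfl fun k _ => ?_
    rcases zmod2_cases (v₁ k) with ha|ha <;> rcases zmod2_cases (v₂ k) with hb|hb <;>
      rcases zmod2_cases (v₃ k) with hc|hc <;> simp [ha, hb, hc, Prod.ext_iff]
  have e2 : (supp v₂).card =
      (Finset.univ.filter fun k => (v₁ k, v₂ k, v₃ k) = (0,1,0)).card +
      (Finset.univ.filter fun k => (v₁ k, v₂ k, v₃ k) = (1,1,0)).card +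
      (Finset.univ.filter fun k => (v₁ k, v₂ k, v₃ k) = (0,1,1)).card +
      (Finset.univ.filter fun k => (v₁ k, v₂ k, v₃ k) = (1,1,1)).card := by
    simp only [supp, Finset.card_filter, ← Finset.sum_add_distrib]
    refine Finset.sum_congr rfl fun k _ => ?_
    rcases zmod2_cases (v₁ k) with ha|ha <;> rcases zmod2_cases (v₂ k) with hb|hb <;>
      rcases zmod2_cases (v₃ k) with hc|hc <;> simp [ha, hb, hc, Prod.ext_iff]
  have e3 : (supp v₃).card =
      (Finset.univ.filter fun k => (v₁ k, v₂ k, v₃ k) = (0,0,1)).card +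
      (Finset.univ.filter fun k => (v₁ k, v₂ k, v₃ k) = (1,0,1)).card +
      (Finset.univ.filter fun k => (v₁ k, v₂ k, v₃ k) = (0,1,1)).card +
      (Finset.univ.filter fun k => (v₁ k, v₂ k, v₃ k) = (1,1,1)).card := by
    simp only [supp, Finset.card_filter, ← Finset.sum_add_distrib]
    refine Finset.sum_congr rfl fun k _ => ?_
    rcases zmod2_cases (v₁ k) with ha|ha <;> rcases zmod2_cases (v₂ k) with hb|hb <;>
      rcases zmod2_cases (v₃ k) with hc|hc <;> simp [ha, hb, hc, Prod.ext_iff]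
  have e12 : (supp v₁ ∩ supp v₂).card =
      (Finset.univ.filter fun k => (v₁ k, v₂ k, v₃ k) = (1,1,0)).card +
      (Finset.univ.filter fun k => (v₁ k, v₂ k, v₃ k) = (1,1,1)).card := by
    simp only [supp, ← Finset.filter_and, Finset.card_filter, ← Finset.sum_add_distrib]
    refine Finset.sum_congr rfl fun k _ => ?_
    rcases zmod2_cases (v₁ k) with ha|ha <;> rcases zmod2_cases (v₂ k) with hb|hb <;>
      rcases zmod2_cases (v₃ k) with hc|hc <;> simp [ha, hb, hc, Prod.ext_iff]
  have e13 : (supp v₁ ∩ supp v₃).card =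
      (Finset.univ.filter fun k => (v₁ k, v₂ k, v₃ k) = (1,0,1)).card +
      (Finset.univ.filter fun k => (v₁ k, v₂ k, v₃ k) = (1,1,1)).card := by
    simp only [supp, ← Finset.filter_and, Finset.card_filter, ← Finset.sum_add_distrib]
    refine Finset.sum_congr rfl fun k _ => ?_
    rcases zmod2_cases (v₁ k) with ha|ha <;> rcases zmod2_cases (v₂ k) with hb|hb <;>
      rcases zmod2_cases (v₃ k) with hc|hc <;> simp [ha, hb, hc, Prod.ext_iff]
  have e23 : (supp v₂ ∩ supp v₃).card =
      (Finset.univ.filter fun k => (v₁ k, v₂ k, v₃ k) = (0,1,1)).card +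
      (Finset.univ.filter fun k => (v₁ k, v₂ k, v₃ k) = (1,1,1)).card := by
    simp only [supp, ← Finset.filter_and, Finset.card_filter, ← Finset.sum_add_distrib]
    refine Finset.sum_congr rfl fun k _ => ?_
    rcases zmod2_cases (v₁ k) with ha|ha <;> rcases zmod2_cases (v₂ k) with hb|hb <;>
      rcases zmod2_cases (v₃ k) with hc|hc <;> simp [ha, hb, hc, Prod.ext_iff]
  have e123 : (supp v₁ ∩ supp v₂ ∩ supp v₃).card =
      (Finset.univ.filter fun k => (v₁ k, v₂ k, v₃ k) = (1,1,1)).card := by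
    simp only [supp, ← Finset.filter_and, Finset.card_filter]
    refine Finset.sum_congr rfl fun k _ => ?_
    rcases zmod2_cases (v₁ k) with ha|ha <;> rcases zmod2_cases (v₂ k) with hb|hb <;>
      rcases zmod2_cases (v₃ k) with hc|hc <;> simp [ha, hb, hc, Prod.ext_iff]
  have em : (Finset.univ : Finset (Fin m)).card =
      (Finset.univ.filter fun k => (v₁ k, v₂ k, v₃ k) = (0,0,0)).card +
      (Finset.univ.filter fun k => (v₁ k, v₂ k, v₃ k) = (1,0,0)).card +
      (Finset.univ.filter fun k => (v₁ k, v₂ k, v₃ k) = (0,1,0)).card +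
      (Finset.univ.filter fun k => (v₁ k, v₂ k, v₃ k) = (0,0,1)).card +
      (Finset.univ.filter fun k => (v₁ k, v₂ k, v₃ k) = (1,1,0)).card +
      (Finset.univ.filter fun k => (v₁ k, v₂ k, v₃ k) = (1,0,1)).card +
      (Finset.univ.filter fun k => (v₁ k, v₂ k, v₃ k) = (0,1,1)).card +
      (Finset.univ.filter fun k => (v₁ k, v₂ k, v₃ k) = (1,1,1)).card := by
    rw [Finset.card_eq_sum_ones]
    simp only [Finset.card_filter, ← Finset.sum_add_distrib]
    refine Finset.sum_congr rfl fun k _ => ?_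
    rcases zmod2_cases (v₁ k) with ha|ha <;> rcases zmod2_cases (v₂ k) with hb|hb <;>
      rcases zmod2_cases (v₃ k) with hc|hc <;> simp [ha, hb, hc, Prod.ext_iff]
  have hm : (Finset.univ : Finset (Fin m)).card = m := by simp
  have e000 : (Finset.univ.filter fun k => (v₁ k, v₂ k, v₃ k) = (0,0,0)).card = 0 := by
    rw [Finset.card_eq_zero, Finset.filter_eq_empty_iff]
    intro k _ hk
    obtain ⟨v, hv, hvk⟩ := hcov k
    apply hvk
    have h1k : v₁ k = 0 := congrArg Prod.fst hk
    have h2k : v₂ k = 0 := congrArg (fun p => p.2.1) hk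
    have h3k : v₃ k = 0 := congrArg (fun p => p.2.2) hk
    have hle : Submodule.span (ZMod 2) ({v₁, v₂, v₃} : Set (Fin m → ZMod 2)) ≤
        LinearMap.ker (LinearMap.proj (R := ZMod 2) (φ := fun _ : Fin m => ZMod 2) k) := by
      rw [Submodule.span_le]
      intro w hw
      simp only [Set.mem_insert_iff, Set.mem_singleton_iff] at hw
      rcases hw with rfl|rfl|rfl <;>
        simp [LinearMap.mem_ker, LinearMap.proj_apply, h1k, h2k, h3k]
    exact LinearMap.mem_ker.mp (hle hv)
  refine ⟨by omega, fun hm17 => ?_⟩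
  subst hm17
  obtain ⟨hc111, hc110, hc101, hc011, hc100, hc010, hc001⟩ :
      (Finset.univ.filter fun k => (v₁ k, v₂ k, v₃ k) = (1,1,1)).card = 1 ∧
      (Finset.univ.filter fun k => (v₁ k, v₂ k, v₃ k) = (1,1,0)).card = 1 ∧
      (Finset.univ.filter fun k => (v₁ k, v₂ k, v₃ k) = (1,0,1)).card = 1 ∧
      (Finset.univ.filter fun k => (v₁ k, v₂ k, v₃ k) = (0,1,1)).card = 7 ∧
      (Finset.univ.filter fun k => (v₁ k, v₂ k, v₃ k) = (1,0,0)).card = 1 ∧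
      (Finset.univ.filter fun k => (v₁ k, v₂ k, v₃ k) = (0,1,0)).card = 3 ∧
      (Finset.univ.filter fun k => (v₁ k, v₂ k, v₃ k) = (0,0,1)).card = 3 := by omega
  obtain ⟨π, hπ⟩ := exists_perm_of_fiber_card_eq
      (fun k : Fin 17 => (v₁ k, v₂ k, v₃ k))
      (fun k : Fin 17 => ((indVec {1,2,3,4} : Fin 17 → ZMod 2) k,
        (indVec {1,2,5,6,7,8,9,10,11,12,13,14} : Fin 17 → ZMod 2) k,
        (indVec {1,3,5,6,7,8,9,10,11,15,16,17} : Fin 17 → ZMod 2) k))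
      (by
        rintro ⟨b1, b2, b3⟩
        rcases zmod2_cases b1 with hb1|hb1 <;> subst hb1 <;>
          rcases zmod2_cases b2 with hb2|hb2 <;> subst hb2 <;>
          rcases zmod2_cases b3 with hb3|hb3 <;> subst hb3
        · exact e000.trans (by decide)
        · exact hc001.trans (by decide)
        · exact hc010.trans (by decide)
        · exact hc011.trans (by decide)
        · exact hc100.trans (by decide)
        · exact hc101.trans (by decide)
        · exact hc110.trans (by decide)
        · exact hc111.trans (by decide))
  refine ⟨π, ?_⟩
  have hv1 : permMap π v₁ = indVec {1,2,3,4} :=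
    funext fun k => congrArg Prod.fst (hπ k)
  have hv2 : permMap π v₂ = indVec {1,2,5,6,7,8,9,10,11,12,13,14} :=
    funext fun k => congrArg (fun p => p.2.1) (hπ k)
  have hv3 : permMap π v₃ = indVec {1,3,5,6,7,8,9,10,11,15,16,17} :=
    funext fun k => congrArg (fun p => p.2.2) (hπ k)
  rw [Submodule.map_span]
  congr 1
  simp only [Set.image_insert_eq, Set.image_singleton, hv1, hv2, hv3]
end

section
/- Let m : ℕ and let V ⊆ (Fin m → ZMod 2) be a doubly even code spanned by linearly independent vectors v₁, v₂, v₃, v₄ such that: |v_i| ≡ 4 (mod 8) for i = 1,2,3 and |v₄| ≡ 0 (mod 8); |supp v_i ∩ supp v_j| ≡ 2 (mod 4) for 1 ≤ i < j ≤ 3 and |supp v_i ∩ supp v₄| ≡ 0 (mod 4) for i = 1,2,3; |supp v₁ ∩ supp v₂ ∩ supp v₃| is odd and |supp v_i ∩ supp v_j ∩ supp v₄| is even for 1 ≤ i < j ≤ 3; and every coordinate k ∈ Fin m lies in the support of some element of V. Then m ≥ 8, and if m = 8 then some permutation of the 8 coordinates maps V onto the code spanned by the indicator vectors of {1,2,3,4},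 {1,2,5,6}, {1,3,5,7} and {1,...,8}. -/
private lemma zmod2_eq_one (x : ZMod 2) : x ≠ 0 ↔ x = 1 := by revert x; decide

private lemma card15 : (Finset.univ.filter fun ε : Fin 4 → ZMod 2 => ε ≠ 0).card = 15 := by
  decide

private lemma count8 (a b c d : ZMod 2) (h : ¬(a = 0 ∧ b = 0 ∧ c = 0 ∧ d = 0)) :
    (Finset.univ.filter fun ε : Fin 4 → ZMod 2 =>
      ε ≠ 0 ∧ ε 0 * a + ε 1 * b + ε 2 * c + ε 3 * d ≠ 0).card = 8 := by
  revert a b c d; decide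

private lemma key1_s17 : ∀ a b c : ZMod 2, (if a ≠ 0 then (1:ℕ) else 0) =
    ((if (a,b,c) = ((1:ZMod 2),(1:ZMod 2),(1:ZMod 2)) then 1 else 0) + (if (a,b,c) = (1,1,0) then 1 else 0)
    + (if (a,b,c) = (1,0,1) then 1 else 0) + (if (a,b,c) = (1,0,0) then 1 else 0)) := by decide

private lemma key2_s17 : ∀ a b c : ZMod 2, (if b ≠ 0 then (1:ℕ) else 0) =
    ((if (a,b,c) = ((1:ZMod 2),(1:ZMod 2),(1:ZMod 2)) then 1 else 0) + (if (a,b,c) = (1,1,0) then 1 else 0)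
    + (if (a,b,c) = (0,1,1) then 1 else 0) + (if (a,b,c) = (0,1,0) then 1 else 0)) := by decide

private lemma key3_s17 : ∀ a b c : ZMod 2, (if c ≠ 0 then (1:ℕ) else 0) =
    ((if (a,b,c) = ((1:ZMod 2),(1:ZMod 2),(1:ZMod 2)) then 1 else 0) + (if (a,b,c) = (1,0,1) then 1 else 0)
    + (if (a,b,c) = (0,1,1) then 1 else 0) + (if (a,b,c) = (0,0,1) then 1 else 0)) := by decide

private lemma key12 : ∀ a b c : ZMod 2, (if a ≠ 0 ∧ b ≠ 0 then (1:ℕ) else 0) =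
    ((if (a,b,c) = ((1:ZMod 2),(1:ZMod 2),(1:ZMod 2)) then 1 else 0)
    + (if (a,b,c) = (1,1,0) then 1 else 0)) := by decide

private lemma key13 : ∀ a b c : ZMod 2, (if a ≠ 0 ∧ c ≠ 0 then (1:ℕ) else 0) =
    ((if (a,b,c) = ((1:ZMod 2),(1:ZMod 2),(1:ZMod 2)) then 1 else 0)
    + (if (a,b,c) = (1,0,1) then 1 else 0)) := by decide

private lemma key23 : ∀ a b c : ZMod 2, (if b ≠ 0 ∧ c ≠ 0 then (1:ℕ) else 0) =
    ((if (a,b,c) = ((1:ZMod 2),(1:ZMod 2),(1:ZMod 2)) then 1 else 0)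
    + (if (a,b,c) = (0,1,1) then 1 else 0)) := by decide

private lemma key123 : ∀ a b c : ZMod 2, (if a ≠ 0 ∧ b ≠ 0 ∧ c ≠ 0 then (1:ℕ) else 0) =
    (if (a,b,c) = ((1:ZMod 2),(1:ZMod 2),(1:ZMod 2)) then 1 else 0) := by decide

private lemma key0 : ∀ a b c : ZMod 2, (1:ℕ) =
    ((if (a,b,c) = ((1:ZMod 2),(1:ZMod 2),(1:ZMod 2)) then 1 else 0) + (if (a,b,c) = (1,1,0) then 1 else 0)
    + (if (a,b,c) = (1,0,1) then 1 else 0) + (if (a,b,c) = (1,0,0) then 1 else 0)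
    + (if (a,b,c) = (0,1,1) then 1 else 0) + (if (a,b,c) = (0,1,0) then 1 else 0)
    + (if (a,b,c) = (0,0,1) then 1 else 0) + (if (a,b,c) = (0,0,0) then 1 else 0)) := by decide

private def sfun : Fin 8 → ZMod 2 × ZMod 2 × ZMod 2 := fun j =>
  (indVec {1,2,3,4} j, indVec {1,2,5,6} j, indVec {1,3,5,7} j)

private lemma sfun_bij : Function.Bijective sfun := by decide

private lemma ind8 : ∀ j : Fin 8, indVec {1,2,3,4,5,6,7,8} j = 1 := by decide

/-- Theorem 4.6, case of `C₁⁴` (characteristic vector `(1110110100)`): a doubly even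
code realizing `C₁⁴` has degree at least 8, and in degree 8 it is, up to a
permutation of coordinates, the basic representation given in the paper. -/
theorem stmt17 (m : ℕ) (v₁ v₂ v₃ v₄ : Fin m → ZMod 2)
    (hli : LinearIndependent (ZMod 2) ![v₁, v₂, v₃, v₄])
    (hde4 : ∀ v ∈ Submodule.span (ZMod 2) ({v₁, v₂, v₃, v₄} : Set (Fin m → ZMod 2)),
      (supp v).card % 4 = 0)
    (hde2 : ∀ u ∈ Submodule.span (ZMod 2) ({v₁, v₂, v₃, v₄} : Set (Fin m → ZMod 2)),
      ∀ v ∈ Submodule.span (ZMod 2) ({v₁, v₂, v₃, v₄} : Set (Fin m → ZMod 2)),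
      (supp u ∩ supp v).card % 2 = 0)
    (h1 : (supp v₁).card % 8 = 4) (h2 : (supp v₂).card % 8 = 4)
    (h3 : (supp v₃).card % 8 = 4) (h4 : (supp v₄).card % 8 = 0)
    (h12 : (supp v₁ ∩ supp v₂).card % 4 = 2)
    (h13 : (supp v₁ ∩ supp v₃).card % 4 = 2)
    (h14 : (supp v₁ ∩ supp v₄).card % 4 = 0)
    (h23 : (supp v₂ ∩ supp v₃).card % 4 = 2)
    (h24 : (supp v₂ ∩ supp v₄).card % 4 = 0)
    (h34 : (supp v₃ ∩ supp v₄).card % 4 = 0)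
    (h123 : Odd (supp v₁ ∩ supp v₂ ∩ supp v₃).card)
    (h124 : Even (supp v₁ ∩ supp v₂ ∩ supp v₄).card)
    (h134 : Even (supp v₁ ∩ supp v₃ ∩ supp v₄).card)
    (h234 : Even (supp v₂ ∩ supp v₃ ∩ supp v₄).card)
    (hcov : ∀ k : Fin m, ∃ v ∈ Submodule.span (ZMod 2)
      ({v₁, v₂, v₃, v₄} : Set (Fin m → ZMod 2)), v k ≠ 0) :
    8 ≤ m ∧ (m = 8 → ∃ π : Equiv.Perm (Fin m),
      Submodule.map (permMap π)
          (Submodule.span (ZMod 2) ({v₁, v₂, v₃, v₄} : Set (Fin m → ZMod 2))) =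
        Submodule.span (ZMod 2) ({indVec {1, 2, 3, 4}, indVec {1, 2, 5, 6},
          indVec {1, 3, 5, 7}, indVec {1, 2, 3, 4, 5, 6, 7, 8}} : Set (Fin m → ZMod 2))) := by
  classical
  have hv1V : v₁ ∈ Submodule.span (ZMod 2) ({v₁, v₂, v₃, v₄} : Set (Fin m → ZMod 2)) :=
    Submodule.subset_span (by simp)
  have hv2V : v₂ ∈ Submodule.span (ZMod 2) ({v₁, v₂, v₃, v₄} : Set (Fin m → ZMod 2)) :=
    Submodule.subset_span (by simp)
  have hv3V : v₃ ∈ Submodule.span (ZMod 2) ({v₁, v₂, v₃, v₄} : Set (Fin m → ZMod 2)) :=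
    Submodule.subset_span (by simp)
  have hv4V : v₄ ∈ Submodule.span (ZMod 2) ({v₁, v₂, v₃, v₄} : Set (Fin m → ZMod 2)) :=
    Submodule.subset_span (by simp)
  set lin : (Fin 4 → ZMod 2) → Fin m → ZMod 2 :=
    fun ε => ε 0 • v₁ + ε 1 • v₂ + ε 2 • v₃ + ε 3 • v₄ with hlin
  have hlinV : ∀ ε, lin ε ∈ Submodule.span (ZMod 2) ({v₁, v₂, v₃, v₄} : Set (Fin m → ZMod 2)) := by
    intro ε
    exact Submodule.add_mem _ (Submodule.add_mem _ (Submodule.add_mem _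
      (Submodule.smul_mem _ _ hv1V) (Submodule.smul_mem _ _ hv2V))
      (Submodule.smul_mem _ _ hv3V)) (Submodule.smul_mem _ _ hv4V)
  have hlinne : ∀ ε : Fin 4 → ZMod 2, ε ≠ 0 → lin ε ≠ 0 := by
    intro ε hε h0
    apply hε
    funext i
    refine Fintype.linearIndependent_iff.mp hli ε ?_ i
    rw [Fin.sum_univ_four]
    simpa using h0
  have hcov' : ∀ k, ¬(v₁ k = 0 ∧ v₂ k = 0 ∧ v₃ k = 0 ∧ v₄ k = 0) := by
    rintro k ⟨e1, e2, e3, e4⟩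
    obtain ⟨v, hvV, hvk⟩ := hcov k
    have hker : Submodule.span (ZMod 2) ({v₁, v₂, v₃, v₄} : Set (Fin m → ZMod 2)) ≤
        LinearMap.ker (LinearMap.proj (R := ZMod 2) (φ := fun _ : Fin m => ZMod 2) k) := by
      rw [Submodule.span_le]
      rintro x (rfl | rfl | rfl | rfl) <;>
        simp [LinearMap.mem_ker, e1, e2, e3, e4]
    exact hvk (hker hvV)
  have hw4 : ∀ ε : Fin 4 → ZMod 2, ε ≠ 0 → 4 ≤ (supp (lin ε)).card := by
    intro ε hε
    have h0 := hde4 _ (hlinV ε)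
    have hpos : 0 < (supp (lin ε)).card := by
      obtain ⟨k, hk⟩ := Function.ne_iff.mp (hlinne ε hε)
      refine Finset.card_pos.mpr ⟨k, ?_⟩
      simp only [supp, Finset.mem_filter, Finset.mem_univ, true_and]
      simpa using hk
    omega
  have hsum : ∑ ε ∈ Finset.univ.filter (fun ε : Fin 4 → ZMod 2 => ε ≠ 0),
      (supp (lin ε)).card = m * 8 := by
    have hc : ∀ ε : Fin 4 → ZMod 2, (supp (lin ε)).card
        = ∑ k : Fin m, if lin ε k ≠ 0 then 1 else 0 := fun ε => Finset.card_filter _ _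
    rw [Finset.sum_congr rfl fun ε _ => hc ε, Finset.sum_comm]
    rw [Finset.sum_congr rfl (fun k (_ : k ∈ Finset.univ) => ?_), Finset.sum_const,
      Finset.card_univ, Fintype.card_fin, smul_eq_mul]
    show (∑ ε ∈ Finset.univ.filter (fun ε : Fin 4 → ZMod 2 => ε ≠ 0),
      if lin ε k ≠ 0 then 1 else 0) = 8
    rw [Finset.sum_filter]
    have : (∑ ε : Fin 4 → ZMod 2, if ε ≠ 0 then (if lin ε k ≠ 0 then (1:ℕ) else 0) else 0)
        = ∑ ε : Fin 4 → ZMod 2, if ε ≠ 0 ∧ lin ε k ≠ 0 then (1:ℕ) else 0 := by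
      refine Finset.sum_congr rfl fun ε _ => ?_
      by_cases hε : ε ≠ 0 <;> by_cases hq : lin ε k ≠ 0 <;> simp [hε, hq]
    rw [this, ← Finset.card_filter]
    have hval : ∀ ε : Fin 4 → ZMod 2, lin ε k
        = ε 0 * v₁ k + ε 1 * v₂ k + ε 2 * v₃ k + ε 3 * v₄ k := fun ε => rfl
    simp only [hval]
    exact count8 _ _ _ _ (hcov' k)
  have h8m : 8 ≤ m := by
    have hle : (Finset.univ.filter fun ε : Fin 4 → ZMod 2 => ε ≠ 0).card • 4 ≤
        ∑ ε ∈ Finset.univ.filter (fun ε : Fin 4 → ZMod 2 => ε ≠ 0), (supp (lin ε)).card :=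
      Finset.card_nsmul_le_sum _ _ _ fun ε hε => hw4 ε (by simpa using hε)
    rw [card15, hsum, smul_eq_mul] at hle
    omega
  refine ⟨h8m, ?_⟩
  intro hm
  subst hm
  have hb : ∀ s : Finset (Fin 8), s.card ≤ 8 := fun s =>
    le_trans (Finset.card_le_univ s) (by simp)
  have c1 : (supp v₁).card = 4 := by have := hb (supp v₁); omega
  have c2 : (supp v₂).card = 4 := by have := hb (supp v₂); omega
  have c3 : (supp v₃).card = 4 := by have := hb (supp v₃); omega
  have hv4ne : v₄ ≠ 0 := by simpa using hli.ne_zero 3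
  have c4 : (supp v₄).card = 8 := by
    have hpos : 0 < (supp v₄).card := by
      obtain ⟨k, hk⟩ := Function.ne_iff.mp hv4ne
      refine Finset.card_pos.mpr ⟨k, ?_⟩
      simp only [supp, Finset.mem_filter, Finset.mem_univ, true_and]
      simpa using hk
    have := hb (supp v₄); omega
  have hv4 : ∀ k, v₄ k = 1 := by
    have huniv : supp v₄ = Finset.univ := Finset.eq_univ_of_card _ (by rw [c4]; simp)
    intro k
    have hk : k ∈ supp v₄ := huniv ▸ Finset.mem_univ k
    have : v₄ k ≠ 0 := by
      simpa only [supp, Finset.mem_filter, Finset.mem_univ, true_and] using hk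
    exact (zmod2_eq_one _).mp this
  have c12 : (supp v₁ ∩ supp v₂).card = 2 := by
    have h : (supp v₁ ∩ supp v₂).card ≤ (supp v₁).card :=
      Finset.card_le_card Finset.inter_subset_left
    omega
  have c13 : (supp v₁ ∩ supp v₃).card = 2 := by
    have h : (supp v₁ ∩ supp v₃).card ≤ (supp v₁).card :=
      Finset.card_le_card Finset.inter_subset_left
    omega
  have c23 : (supp v₂ ∩ supp v₃).card = 2 := by
    have h : (supp v₂ ∩ supp v₃).card ≤ (supp v₂).card :=
      Finset.card_le_card Finset.inter_subset_left
    omega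
  have c123 : (supp v₁ ∩ supp v₂ ∩ supp v₃).card = 1 := by
    have h : (supp v₁ ∩ supp v₂ ∩ supp v₃).card ≤ (supp v₁ ∩ supp v₂).card :=
      Finset.card_le_card Finset.inter_subset_left
    obtain ⟨r, hr⟩ := h123
    omega
  set t : Fin 8 → ZMod 2 × ZMod 2 × ZMod 2 := fun k => (v₁ k, v₂ k, v₃ k) with htdef
  have hn : ∀ c, (Finset.univ.filter fun k => t k = c).card
      = ∑ k : Fin 8, if t k = c then 1 else 0 := fun c => Finset.card_filter _ _
  have hsupp1 : (supp v₁).card = ∑ k : Fin 8, if v₁ k ≠ 0 then 1 else 0 :=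
    Finset.card_filter _ _
  have hsupp2 : (supp v₂).card = ∑ k : Fin 8, if v₂ k ≠ 0 then 1 else 0 :=
    Finset.card_filter _ _
  have hsupp3 : (supp v₃).card = ∑ k : Fin 8, if v₃ k ≠ 0 then 1 else 0 :=
    Finset.card_filter _ _
  have hint : ∀ u v : Fin 8 → ZMod 2, (supp u ∩ supp v).card
      = ∑ k : Fin 8, if u k ≠ 0 ∧ v k ≠ 0 then 1 else 0 := by
    intro u v
    rw [show supp u ∩ supp v = Finset.univ.filter fun k => u k ≠ 0 ∧ v k ≠ 0 by
      ext k; simp [supp]]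
    exact Finset.card_filter _ _
  have hint3 : (supp v₁ ∩ supp v₂ ∩ supp v₃).card
      = ∑ k : Fin 8, if v₁ k ≠ 0 ∧ v₂ k ≠ 0 ∧ v₃ k ≠ 0 then 1 else 0 := by
    rw [show supp v₁ ∩ supp v₂ ∩ supp v₃
        = Finset.univ.filter fun k => v₁ k ≠ 0 ∧ v₂ k ≠ 0 ∧ v₃ k ≠ 0 by
      ext k; simp [supp, and_assoc]]
    exact Finset.card_filter _ _
  have E1 : (Finset.univ.filter fun k => t k = (1,1,1)).card
      + (Finset.univ.filter fun k => t k = (1,1,0)).card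
      + (Finset.univ.filter fun k => t k = (1,0,1)).card
      + (Finset.univ.filter fun k => t k = (1,0,0)).card = (supp v₁).card := by
    rw [hn, hn, hn, hn, ← Finset.sum_add_distrib, ← Finset.sum_add_distrib,
      ← Finset.sum_add_distrib, hsupp1]
    exact Finset.sum_congr rfl fun k _ => (key1_s17 (v₁ k) (v₂ k) (v₃ k)).symm
  have E2 : (Finset.univ.filter fun k => t k = (1,1,1)).card
      + (Finset.univ.filter fun k => t k = (1,1,0)).card
      + (Finset.univ.filter fun k => t k = (0,1,1)).card
      + (Finset.univ.filter fun k => t k = (0,1,0)).card = (supp v₂).card := by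
    rw [hn, hn, hn, hn, ← Finset.sum_add_distrib, ← Finset.sum_add_distrib,
      ← Finset.sum_add_distrib, hsupp2]
    exact Finset.sum_congr rfl fun k _ => (key2_s17 (v₁ k) (v₂ k) (v₃ k)).symm
  have E3 : (Finset.univ.filter fun k => t k = (1,1,1)).card
      + (Finset.univ.filter fun k => t k = (1,0,1)).card
      + (Finset.univ.filter fun k => t k = (0,1,1)).card
      + (Finset.univ.filter fun k => t k = (0,0,1)).card = (supp v₃).card := by
    rw [hn, hn, hn, hn, ← Finset.sum_add_distrib, ← Finset.sum_add_distrib,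
      ← Finset.sum_add_distrib, hsupp3]
    exact Finset.sum_congr rfl fun k _ => (key3_s17 (v₁ k) (v₂ k) (v₃ k)).symm
  have E12 : (Finset.univ.filter fun k => t k = (1,1,1)).card
      + (Finset.univ.filter fun k => t k = (1,1,0)).card = (supp v₁ ∩ supp v₂).card := by
    rw [hn, hn, ← Finset.sum_add_distrib, hint]
    exact Finset.sum_congr rfl fun k _ => (key12 (v₁ k) (v₂ k) (v₃ k)).symm
  have E13 : (Finset.univ.filter fun k => t k = (1,1,1)).card
      + (Finset.univ.filter fun k => t k = (1,0,1)).card = (supp v₁ ∩ supp v₃).card := by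
    rw [hn, hn, ← Finset.sum_add_distrib, hint]
    exact Finset.sum_congr rfl fun k _ => (key13 (v₁ k) (v₂ k) (v₃ k)).symm
  have E23 : (Finset.univ.filter fun k => t k = (1,1,1)).card
      + (Finset.univ.filter fun k => t k = (0,1,1)).card = (supp v₂ ∩ supp v₃).card := by
    rw [hn, hn, ← Finset.sum_add_distrib, hint]
    exact Finset.sum_congr rfl fun k _ => (key23 (v₁ k) (v₂ k) (v₃ k)).symm
  have E123 : (Finset.univ.filter fun k => t k = (1,1,1)).card
      = (supp v₁ ∩ supp v₂ ∩ supp v₃).card := by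
    rw [hn, hint3]
    exact Finset.sum_congr rfl fun k _ => (key123 (v₁ k) (v₂ k) (v₃ k)).symm
  have E0 : (Finset.univ.filter fun k => t k = (1,1,1)).card
      + (Finset.univ.filter fun k => t k = (1,1,0)).card
      + (Finset.univ.filter fun k => t k = (1,0,1)).card
      + (Finset.univ.filter fun k => t k = (1,0,0)).card
      + (Finset.univ.filter fun k => t k = (0,1,1)).card
      + (Finset.univ.filter fun k => t k = (0,1,0)).card
      + (Finset.univ.filter fun k => t k = (0,0,1)).card
      + (Finset.univ.filter fun k => t k = (0,0,0)).card = 8 := by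
    rw [hn, hn, hn, hn, hn, hn, hn, hn, ← Finset.sum_add_distrib, ← Finset.sum_add_distrib,
      ← Finset.sum_add_distrib, ← Finset.sum_add_distrib, ← Finset.sum_add_distrib,
      ← Finset.sum_add_distrib, ← Finset.sum_add_distrib]
    calc _ = ∑ _k : Fin 8, (1:ℕ) :=
          Finset.sum_congr rfl fun k _ => (key0 (v₁ k) (v₂ k) (v₃ k)).symm
      _ = 8 := by simp
  have f111 : (Finset.univ.filter fun k => t k = (1,1,1)).card = 1 := by omega
  have f110 : (Finset.univ.filter fun k => t k = (1,1,0)).card = 1 := by omega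
  have f101 : (Finset.univ.filter fun k => t k = (1,0,1)).card = 1 := by omega
  have f011 : (Finset.univ.filter fun k => t k = (0,1,1)).card = 1 := by omega
  have f100 : (Finset.univ.filter fun k => t k = (1,0,0)).card = 1 := by omega
  have f010 : (Finset.univ.filter fun k => t k = (0,1,0)).card = 1 := by omega
  have f001 : (Finset.univ.filter fun k => t k = (0,0,1)).card = 1 := by omega
  have f000 : (Finset.univ.filter fun k => t k = (0,0,0)).card = 1 := by omega
  have hone : ∀ c : ZMod 2 × ZMod 2 × ZMod 2,
      (Finset.univ.filter fun k => t k = c).card = 1 := by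
    rintro ⟨a, b, c⟩
    fin_cases a <;> fin_cases b <;> fin_cases c <;>
      first
        | exact f000 | exact f001 | exact f010 | exact f011
        | exact f100 | exact f101 | exact f110 | exact f111
  have hinj : Function.Injective t := by
    intro x y hxy
    obtain ⟨a, ha⟩ := Finset.card_eq_one.mp (hone (t y))
    have hx : x ∈ Finset.univ.filter fun k => t k = t y := by simp [hxy]
    have hy : y ∈ Finset.univ.filter fun k => t k = t y := by simp
    rw [ha, Finset.mem_singleton] at hx hy
    rw [hx, hy]
  have hbij : Function.Bijective t :=
    (Fintype.bijective_iff_injective_and_card t).mpr ⟨hinj, by simp⟩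
  refine ⟨(Equiv.ofBijective sfun sfun_bij).trans (Equiv.ofBijective t hbij).symm, ?_⟩
  set π := (Equiv.ofBijective sfun sfun_bij).trans (Equiv.ofBijective t hbij).symm with hπdef
  have hπ : ∀ j, t (π j) = sfun j := fun j =>
    (Equiv.ofBijective t hbij).apply_symm_apply (sfun j)
  have hw1 : permMap π v₁ = indVec {1,2,3,4} := by
    funext j; exact congrArg Prod.fst (hπ j)
  have hw2 : permMap π v₂ = indVec {1,2,5,6} := by
    funext j; exact congrArg (fun p => p.2.1) (hπ j)
  have hw3 : permMap π v₃ = indVec {1,3,5,7} := by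
    funext j; exact congrArg (fun p => p.2.2) (hπ j)
  have hw4' : permMap π v₄ = indVec {1,2,3,4,5,6,7,8} := by
    funext j
    show v₄ (π j) = indVec {1,2,3,4,5,6,7,8} j
    rw [hv4, ind8]
  have himg : ⇑(permMap π) '' ({v₁, v₂, v₃, v₄} : Set (Fin 8 → ZMod 2))
      = ({indVec {1, 2, 3, 4}, indVec {1, 2, 5, 6}, indVec {1, 3, 5, 7},
          indVec {1, 2, 3, 4, 5, 6, 7, 8}} : Set (Fin 8 → ZMod 2)) := by
    simp only [Set.image_insert_eq, Set.image_singleton, hw1, hw2, hw3, hw4']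
  rw [Submodule.map_span, himg]
end
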